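/- arXiv:2402.02149 — 6 statements merged into one kernel-verified Lean document; each statement's English description precedes it below -/
import Mathlib

section
/- Let μ be a probability measure on ℝ^d, let s ≠ 0 and σ > 0 be reals, and define g(x) = ∫ exp(−‖x − s·x₀‖²/(2 s² σ²)) dμ(x₀) and m(x) = (∫ x₀ · exp(−‖x − s·x₀‖²/(2 s² σ²)) dμ(x₀)) / g(x). Then g(x) > 0 for every x ∈ ℝ^d, g is differentiable, and for every x ∈ ℝ^d the gradient of log g satisfies ∇ log g(x) = (s·m(x) − x)/(s² σ²). (Tweedie's formula: the score of the Gaussian-smoothed marginal equals (s·E[x₀|x_t] − x_t)/(s²σ²).) -/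
open MeasureTheory Real

/-!
Differentiate under the integral sign: the gradient of the Gaussian kernel
`y ↦ exp (-‖y - v‖² / c)` is `(2 / c) exp (-‖y - v‖² / c) (v - y)`, whose norm is bounded
uniformly in `v` and `y` by `2 / √c` because `r exp (-r² / c) ≤ √c`. Hence
`∇g(y) = (2 / c) (∫ exp (-‖y - v‖² / c) v dν(v) - g(y) y)` for `ν` the law of `s • x₀`, and
dividing by `g > 0` gives the score.
-/

theorem mul_exp_neg_sq_div_le_sqrt {c : ℝ} (hc : 0 < c) (r : ℝ) :
    r * exp (-r ^ 2 / c) ≤ √c := by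
  have hsc : 0 < √c := sqrt_pos.mpr hc
  -- with `t = r / √c` this is `t ≤ 1 + t² ≤ exp (t²)`
  set t := r / √c
  have hr : r = √c * t := (mul_div_cancel₀ r hsc.ne').symm
  have ht : r ^ 2 / c = t ^ 2 := by rw [hr, mul_pow, sq_sqrt hc.le]; field_simp
  have key : t ≤ exp (t ^ 2) := by nlinarith [add_one_le_exp (t ^ 2), sq_nonneg (t - 1)]
  rw [neg_div, exp_neg, ht, ← div_eq_mul_inv, div_le_iff₀ (exp_pos _), hr]
  exact mul_le_mul_of_nonneg_left key hsc.le

section Gradient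

variable {H : Type*} [NormedAddCommGroup H] [InnerProductSpace ℝ H] [CompleteSpace H]

theorem HasGradientAt.log {f : H → ℝ} {f' x : H} (hf : HasGradientAt f f' x) (hx : f x ≠ 0) :
    HasGradientAt (fun y => Real.log (f y)) ((f x)⁻¹ • f') x := by
  rw [hasGradientAt_iff_hasFDerivAt, map_smul]
  exact hf.hasFDerivAt.log hx

theorem hasGradientAt_exp_neg_norm_sub_sq_div (c : ℝ) (v x : H) :
    HasGradientAt (fun y => exp (-‖y - v‖ ^ 2 / c))
      ((2 / c * exp (-‖x - v‖ ^ 2 / c)) • (v - x)) x := by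
  have h := (((hasFDerivAt_id x).sub_const v).norm_sq.neg.mul_const c⁻¹).exp
  simp only [Pi.neg_apply, id_eq, ← div_eq_mul_inv] at h
  rw [hasGradientAt_iff_hasFDerivAt]
  refine h.congr_fderiv ?_
  ext w
  simp only [map_sub, map_smul, ContinuousLinearMap.comp_id, neg_apply, smul_apply, sub_apply,
    coe_innerSL_apply, InnerProductSpace.toDual_apply_apply, smul_neg, nsmul_eq_mul,
    Nat.cast_ofNat, smul_eq_mul]
  ring

end Gradient

section Smoothing

variable {H : Type*} [NormedAddCommGroup H] {α : Type*} [MeasurableSpace α] {ν : Measure α}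
  [IsFiniteMeasure ν] {φ : α → H} {c : ℝ}

theorem integrable_exp_neg_norm_sub_sq_div (hc : 0 ≤ c) (hφ : AEStronglyMeasurable φ ν) (x : H) :
    Integrable (fun a => exp (-‖x - φ a‖ ^ 2 / c)) ν := by
  refine (integrable_const (1 : ℝ)).mono' (by fun_prop) (ae_of_all _ fun a => ?_)
  rw [norm_of_nonneg (exp_pos _).le, exp_le_one_iff]
  exact div_nonpos_of_nonpos_of_nonneg (neg_nonpos.2 (sq_nonneg _)) hc

theorem integrable_exp_neg_norm_sub_sq_div_smul [NormedSpace ℝ H] (hc : 0 < c)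
    (hφ : AEStronglyMeasurable φ ν) (x : H) :
    Integrable (fun a => exp (-‖x - φ a‖ ^ 2 / c) • φ a) ν := by
  refine (integrable_const (√c + ‖x‖)).mono' (by fun_prop) (ae_of_all _ fun a => ?_)
  set k := exp (-‖x - φ a‖ ^ 2 / c)
  have hk : k ≤ 1 := by
    rw [exp_le_one_iff]
    exact div_nonpos_of_nonpos_of_nonneg (neg_nonpos.2 (sq_nonneg _)) hc.le
  calc ‖k • φ a‖ = k * ‖φ a‖ := by rw [norm_smul, norm_of_nonneg (exp_pos _).le]
    _ ≤ k * (‖x - φ a‖ + ‖x‖) := by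
      gcongr
      exact norm_sub_rev x (φ a) ▸ norm_le_norm_sub_add (φ a) x
    _ = ‖x - φ a‖ * k + k * ‖x‖ := by ring
    _ ≤ √c + 1 * ‖x‖ := by
      gcongr
      exact mul_exp_neg_sq_div_le_sqrt hc _
    _ = √c + ‖x‖ := by ring

variable [InnerProductSpace ℝ H] [CompleteSpace H]

theorem hasGradientAt_integral_exp_neg_norm_sub_sq_div (hc : 0 < c)
    (hφ : AEStronglyMeasurable φ ν) (x : H) :
    HasGradientAt (fun y => ∫ a, exp (-‖y - φ a‖ ^ 2 / c) ∂ν)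
      (∫ a, (2 / c * exp (-‖x - φ a‖ ^ 2 / c)) • (φ a - x) ∂ν) x := by
  have hbound (y : H) (a : α) :
      ‖(2 / c * exp (-‖y - φ a‖ ^ 2 / c)) • (φ a - y)‖ ≤ 2 / c * √c := by
    rw [norm_smul, norm_of_nonneg (by positivity), norm_sub_rev, mul_assoc, mul_comm (exp _)]
    gcongr
    exact mul_exp_neg_sq_div_le_sqrt hc _
  rw [hasGradientAt_iff_hasFDerivAt]
  refine (hasFDerivAt_integral_of_dominated_of_fderiv_le Filter.univ_mem
    (Filter.Eventually.of_forall fun y => by fun_prop)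
    (integrable_exp_neg_norm_sub_sq_div hc.le hφ x) (by fun_prop)
    (ae_of_all _ fun a y _ => ((InnerProductSpace.toDual ℝ H).norm_map _).trans_le (hbound y a))
    (integrable_const _)
    (ae_of_all _ fun a y _ =>
      (hasGradientAt_exp_neg_norm_sub_sq_div c (φ a) y).hasFDerivAt)).congr_fderiv ?_
  exact (InnerProductSpace.toDual ℝ H).toLinearIsometry.integral_comp_comm _

theorem hasGradientAt_log_integral_exp_neg_norm_sub_sq_div [NeZero ν] (hc : 0 < c)
    (hφ : AEStronglyMeasurable φ ν) (x : H) :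
    HasGradientAt (fun y => Real.log (∫ a, exp (-‖y - φ a‖ ^ 2 / c) ∂ν))
      ((2 / c) • ((∫ a, exp (-‖x - φ a‖ ^ 2 / c) ∂ν)⁻¹ •
        ∫ a, exp (-‖x - φ a‖ ^ 2 / c) • φ a ∂ν - x)) x := by
  set Z := ∫ a, exp (-‖x - φ a‖ ^ 2 / c) ∂ν
  have hZ : 0 < Z := integral_exp_pos (integrable_exp_neg_norm_sub_sq_div hc.le hφ x)
  have hsplit : ∫ a, (2 / c * exp (-‖x - φ a‖ ^ 2 / c)) • (φ a - x) ∂ν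
      = (2 / c) • (∫ a, exp (-‖x - φ a‖ ^ 2 / c) • φ a ∂ν - Z • x) := by
    simp_rw [mul_smul]
    rw [integral_smul]
    congr 1
    simp_rw [smul_sub]
    rw [integral_sub (integrable_exp_neg_norm_sub_sq_div_smul hc hφ x)
      ((integrable_exp_neg_norm_sub_sq_div hc.le hφ x).smul_const x), integral_smul_const]
  convert (hasGradientAt_integral_exp_neg_norm_sub_sq_div hc hφ x).log hZ.ne' using 1
  rw [hsplit, smul_comm _ (2 / c), smul_sub Z⁻¹, inv_smul_smul₀ hZ.ne']

end Smoothing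

/-- **Tweedie's formula.** For a probability measure `μ` on `ℝ^d`, `s ≠ 0`, `σ > 0`,
the Gaussian-smoothed density `g` is positive and differentiable, and the score of `log g`
equals `(s • m x - x) / (s² σ²)` where `m` is the posterior mean. -/
theorem tweedie_formula {d : ℕ} (μ : Measure (EuclideanSpace ℝ (Fin d)))
    [IsProbabilityMeasure μ] (s σ : ℝ) (hs : s ≠ 0) (hσ : 0 < σ)
    (g : EuclideanSpace ℝ (Fin d) → ℝ)
    (hg : ∀ x, g x = ∫ x₀, Real.exp (-‖x - s • x₀‖ ^ 2 / (2 * s ^ 2 * σ ^ 2)) ∂μ)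
    (m : EuclideanSpace ℝ (Fin d) → EuclideanSpace ℝ (Fin d))
    (hm : ∀ x, m x = (g x)⁻¹ •
      ∫ x₀, Real.exp (-‖x - s • x₀‖ ^ 2 / (2 * s ^ 2 * σ ^ 2)) • x₀ ∂μ) :
    (∀ x, 0 < g x) ∧ Differentiable ℝ g ∧
      ∀ x, gradient (fun y => Real.log (g y)) x = (s ^ 2 * σ ^ 2)⁻¹ • (s • m x - x) := by
  obtain rfl : g = _ := funext hg
  obtain rfl : m = _ := funext hm
  have hc : 0 < 2 * s ^ 2 * σ ^ 2 := by positivity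
  have hφ : AEStronglyMeasurable (fun x₀ => s • x₀) μ :=
    (continuous_const_smul s).aestronglyMeasurable
  refine ⟨fun x => integral_exp_pos (integrable_exp_neg_norm_sub_sq_div hc.le hφ x),
    fun x => (hasGradientAt_integral_exp_neg_norm_sub_sq_div hc hφ x).differentiableAt,
    fun x => ?_⟩
  rw [(hasGradientAt_log_integral_exp_neg_norm_sub_sq_div hc hφ x).gradient]
  simp_rw [smul_comm _ s]
  rw [integral_smul]
  module
end

section
/- Let A be a real m×d matrix and B a real d×m matrix satisfying the four Moore–Penrose equations A B A = A, B A B = B, (A B)ᵀ = A B, and (B A)ᵀ = B A. Fix r > 0, y ∈ ℝ^m and D ∈ ℝ^d. For each σ > 0 let x*(σ) denote the unique minimizer over x ∈ ℝ^d of ‖y − A x‖² + (σ²/r²)·‖x − D‖². Then x*(σ) = D + r² Aᵀ (σ² I_m + r² A Aᵀ)⁻¹ (y − A D) for every σ > 0, and x*(σ) converges, as σ → 0⁺, to B y + (I_d − B A) D. (DDNM as the vanishing-noise limit of the isotropic-covariance proximal/posterior-mean solution.) -/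
open Matrix Filter Topology

/-! The closed form solves the normal equations `Aᵀ (y - A x) = (σ² / r²) (x - D)`, and completing
the square shows that any solution of them minimizes the objective.

For the limit put `M = s 1 + t A Aᵀ`, `u = y - A D` and `w = M⁻¹ u`. The Penrose identities
`B A Aᵀ = Aᵀ` and `B Bᵀ Aᵀ = B` rewrite the closed form as `D + B u - (s / t) B Bᵀ B (u - s w)`,
and `‖s w‖ ≤ ‖u‖` because `A Aᵀ` is positive semidefinite, so the correction vanishes as `s → 0`. -/

namespace Matrix

variable {m n : Type*} [Fintype m] [Fintype n]

lemma dotProduct_self_nonneg {R : Type*} [Ring R] [LinearOrder R] [IsStrictOrderedRing R]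
    (v : m → R) : 0 ≤ v ⬝ᵥ v :=
  Finset.sum_nonneg fun i _ => mul_self_nonneg (v i)

lemma norm_le_sqrt_dotProduct_self (v : m → ℝ) : ‖v‖ ≤ √(v ⬝ᵥ v) := by
  refine (pi_norm_le_iff_of_nonneg (Real.sqrt_nonneg _)).2 fun i => ?_
  rw [Real.norm_eq_abs]
  refine Real.abs_le_sqrt ?_
  simpa [sq, dotProduct] using
    Finset.single_le_sum (fun j _ => mul_self_nonneg (v j)) (Finset.mem_univ i)

lemma mul_mul_transpose_eq_transpose {R : Type*} [CommRing R] {A : Matrix m n R} {B : Matrix n m R}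
    (h1 : A * B * A = A) (h4 : (B * A)ᵀ = B * A) : B * A * Aᵀ = Aᵀ := by
  rw [← h4, ← transpose_mul, ← Matrix.mul_assoc, h1]

lemma mul_transpose_mul_transpose_eq {R : Type*} [CommRing R] {A : Matrix m n R} {B : Matrix n m R}
    (h2 : B * A * B = B) (h3 : (A * B)ᵀ = A * B) : B * Bᵀ * Aᵀ = B := by
  rw [Matrix.mul_assoc, ← transpose_mul, h3, ← Matrix.mul_assoc, h2]

lemma smul_dotProduct_smul_le {P : Matrix m m ℝ} (hP : P.PosSemidef) {s : ℝ} (hs : 0 ≤ s)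
    (w : m → ℝ) : (s • w) ⬝ᵥ (s • w) ≤ (s • w + P *ᵥ w) ⬝ᵥ (s • w + P *ᵥ w) := by
  have hwPw : 0 ≤ w ⬝ᵥ P *ᵥ w := by simpa using hP.dotProduct_mulVec_nonneg w
  have hPw := dotProduct_self_nonneg (P *ᵥ w)
  simp only [add_dotProduct, dotProduct_add, smul_dotProduct, dotProduct_smul, smul_eq_mul,
    dotProduct_comm (P *ᵥ w) w]
  nlinarith [mul_nonneg hs hwPw]

lemma posSemidef_self_mul_transpose (A : Matrix m n ℝ) : (A * Aᵀ).PosSemidef := by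
  simpa only [conjTranspose_eq_transpose_of_trivial] using posSemidef_self_mul_conjTranspose A

variable [DecidableEq m]

lemma isUnit_det_smul_one_add {P : Matrix m m ℝ} (hP : P.PosSemidef) {s : ℝ} (hs : 0 < s) :
    IsUnit (s • 1 + P).det :=
  (isUnit_iff_isUnit_det _).1 ((PosDef.one.smul hs).add_posSemidef hP).isUnit

lemma mulVec_nonsing_inv_mulVec {R : Type*} [CommRing R] {M : Matrix m m R} (hM : IsUnit M.det)
    (u : m → R) :
    M *ᵥ (M⁻¹ *ᵥ u) = u := by
  rw [mulVec_mulVec, mul_nonsing_inv _ hM, one_mulVec]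

lemma norm_smul_nonsing_inv_smul_one_add_mulVec_le {P : Matrix m m ℝ} (hP : P.PosSemidef)
    {s : ℝ} (hs : 0 < s) (u : m → ℝ) : ‖s • ((s • 1 + P)⁻¹ *ᵥ u)‖ ≤ √(u ⬝ᵥ u) := by
  have hM := isUnit_det_smul_one_add hP hs
  set w := (s • 1 + P)⁻¹ *ᵥ u
  have hw : s • w + P *ᵥ w = u := by
    simpa only [add_mulVec, smul_mulVec, one_mulVec] using mulVec_nonsing_inv_mulVec hM u
  calc ‖s • w‖ ≤ √((s • w) ⬝ᵥ (s • w)) := norm_le_sqrt_dotProduct_self _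
    _ ≤ √(u ⬝ᵥ u) := Real.sqrt_le_sqrt (hw ▸ smul_dotProduct_smul_le hP hs.le w)

end Matrix

section Tikhonov

variable {m n : Type*} [Fintype m] [Fintype n]

def tikhonovObjective (A : Matrix m n ℝ) (y : m → ℝ) (D : n → ℝ) (c : ℝ) (x : n → ℝ) : ℝ :=
  (y - A *ᵥ x) ⬝ᵥ (y - A *ᵥ x) + c * ((x - D) ⬝ᵥ (x - D))

lemma tikhonovObjective_eq_sum (A : Matrix m n ℝ) (y : m → ℝ) (D : n → ℝ) (c : ℝ) (x : n → ℝ) :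
    tikhonovObjective A y D c x = ∑ i, (y i - (A *ᵥ x) i) ^ 2 + c * ∑ j, (x j - D j) ^ 2 := by
  simp only [tikhonovObjective, dotProduct, sq, Pi.sub_apply]

variable {A : Matrix m n ℝ} {y : m → ℝ} {D : n → ℝ} {c : ℝ} {x : n → ℝ}

lemma tikhonovObjective_add_of_normal_eq (hx : Aᵀ *ᵥ (y - A *ᵥ x) = c • (x - D)) (h : n → ℝ) :
    tikhonovObjective A y D c (x + h) =
      tikhonovObjective A y D c x + (A *ᵥ h) ⬝ᵥ (A *ᵥ h) + c * (h ⬝ᵥ h) := by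
  have cross : (y - A *ᵥ x) ⬝ᵥ A *ᵥ h = c * ((x - D) ⬝ᵥ h) := by
    rw [dotProduct_mulVec, ← mulVec_transpose, hx, smul_dotProduct, smul_eq_mul]
  rw [tikhonovObjective, tikhonovObjective, mulVec_add, sub_add_eq_sub_sub, add_sub_right_comm]
  generalize y - A *ᵥ x = p at cross ⊢
  generalize x - D = e at cross ⊢
  simp only [sub_dotProduct, dotProduct_sub, add_dotProduct, dotProduct_add,
    dotProduct_comm (A *ᵥ h) p, dotProduct_comm h e, cross]
  ring

lemma tikhonovObjective_le_of_normal_eq (hc : 0 ≤ c) (hx : Aᵀ *ᵥ (y - A *ᵥ x) = c • (x - D))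
    (z : n → ℝ) : tikhonovObjective A y D c x ≤ tikhonovObjective A y D c z := by
  have hz := tikhonovObjective_add_of_normal_eq hx (z - x)
  rw [add_sub_cancel] at hz
  rw [hz]
  nlinarith [dotProduct_self_nonneg (A *ᵥ (z - x)),
    mul_nonneg hc (dotProduct_self_nonneg (z - x))]

variable [DecidableEq m]

noncomputable def tikhonovSolution (A : Matrix m n ℝ) (y : m → ℝ) (D : n → ℝ) (s t : ℝ) : n → ℝ :=
  D + (t • (Aᵀ * (s • (1 : Matrix m m ℝ) + t • (A * Aᵀ))⁻¹)) *ᵥ (y - A *ᵥ D)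

lemma tikhonovSolution_eq (s t : ℝ) :
    tikhonovSolution A y D s t =
      D + t • (Aᵀ *ᵥ ((s • (1 : Matrix m m ℝ) + t • (A * Aᵀ))⁻¹ *ᵥ (y - A *ᵥ D))) := by
  rw [tikhonovSolution, smul_mulVec, mulVec_mulVec]

lemma sub_mulVec_tikhonovSolution {s t : ℝ}
    (hM : IsUnit (s • (1 : Matrix m m ℝ) + t • (A * Aᵀ)).det) :
    y - A *ᵥ tikhonovSolution A y D s t =
      s • ((s • (1 : Matrix m m ℝ) + t • (A * Aᵀ))⁻¹ *ᵥ (y - A *ᵥ D)) := by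
  have hw := mulVec_nonsing_inv_mulVec hM (y - A *ᵥ D)
  rw [tikhonovSolution_eq, mulVec_add, mulVec_smul, mulVec_mulVec, sub_add_eq_sub_sub]
  set w := (s • (1 : Matrix m m ℝ) + t • (A * Aᵀ))⁻¹ *ᵥ (y - A *ᵥ D)
  rw [add_mulVec, smul_mulVec, one_mulVec, smul_mulVec] at hw
  rw [← hw, add_sub_cancel_right]

lemma transpose_mulVec_sub_mulVec_tikhonovSolution {s t : ℝ} (ht : t ≠ 0)
    (hM : IsUnit (s • (1 : Matrix m m ℝ) + t • (A * Aᵀ)).det) :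
    Aᵀ *ᵥ (y - A *ᵥ tikhonovSolution A y D s t) = (s / t) • (tikhonovSolution A y D s t - D) := by
  rw [sub_mulVec_tikhonovSolution hM, tikhonovSolution_eq, add_sub_cancel_left, mulVec_smul,
    smul_smul, div_mul_cancel₀ s ht]

variable {B : Matrix n m ℝ}

lemma tikhonovSolution_eq_pinv_sub (h1 : A * B * A = A) (h2 : B * A * B = B)
    (h3 : (A * B)ᵀ = A * B) (h4 : (B * A)ᵀ = B * A) {s t : ℝ} (ht : t ≠ 0)
    (hM : IsUnit (s • (1 : Matrix m m ℝ) + t • (A * Aᵀ)).det) :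
    tikhonovSolution A y D s t = D + B *ᵥ (y - A *ᵥ D) - (B * Bᵀ * B) *ᵥ ((s / t) •
      (y - A *ᵥ D - s • ((s • (1 : Matrix m m ℝ) + t • (A * Aᵀ))⁻¹ *ᵥ (y - A *ᵥ D)))) := by
  have hw := mulVec_nonsing_inv_mulVec hM (y - A *ᵥ D)
  rw [tikhonovSolution_eq]
  set u := y - A *ᵥ D
  set w := (s • (1 : Matrix m m ℝ) + t • (A * Aᵀ))⁻¹ *ᵥ u
  have hres : u - s • w = t • (A *ᵥ (Aᵀ *ᵥ w)) := by
    rw [← hw, add_mulVec, smul_mulVec, one_mulVec, smul_mulVec, add_sub_cancel_left,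
      mulVec_mulVec w A Aᵀ]
  have hBres : B *ᵥ (u - s • w) = t • (Aᵀ *ᵥ w) := by
    rw [hres, mulVec_smul, mulVec_mulVec, mulVec_mulVec, mul_mul_transpose_eq_transpose h1 h4]
  have hBw : (B * Bᵀ * B) *ᵥ ((s / t) • (u - s • w)) = s • (B *ᵥ w) := by
    rw [mulVec_smul, ← mulVec_mulVec, hBres, mulVec_smul, mulVec_mulVec,
      mul_transpose_mul_transpose_eq h2 h3, smul_smul, div_mul_cancel₀ s ht]
  rw [hBw, ← hBres, mulVec_sub, mulVec_smul]
  abel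

lemma tendsto_tikhonovSolution (h1 : A * B * A = A) (h2 : B * A * B = B)
    (h3 : (A * B)ᵀ = A * B) (h4 : (B * A)ᵀ = B * A) {t : ℝ} (ht : 0 < t) :
    Tendsto (fun s => tikhonovSolution A y D s t) (𝓝[>] 0) (𝓝 (D + B *ᵥ (y - A *ᵥ D))) := by
  set u := y - A *ᵥ D
  have hP := (posSemidef_self_mul_transpose A).smul ht.le
  have hbdd : IsBoundedUnder (· ≤ ·) (𝓝[>] 0)
      (norm ∘ fun s : ℝ => u - s • ((s • (1 : Matrix m m ℝ) + t • (A * Aᵀ))⁻¹ *ᵥ u)) :=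
    isBoundedUnder_of_eventually_le <| eventually_mem_nhdsWithin.mono fun s hs =>
      (norm_sub_le _ _).trans
        (add_le_add_right (norm_smul_nonsing_inv_smul_one_add_mulVec_le hP hs u) _)
  have hdiv : Tendsto (fun s : ℝ => s / t) (𝓝[>] 0) (𝓝 0) :=
    tendsto_nhdsWithin_of_tendsto_nhds (by simpa using (continuous_id.div_const t).tendsto 0)
  have hcorr :=
    ((continuous_const (y := B * Bᵀ * B)).matrix_mulVec continuous_id |>.tendsto 0).comp
    (hdiv.zero_smul_isBoundedUnder_le hbdd)
  refine Tendsto.congr' (eventually_mem_nhdsWithin.mono fun s hs =>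
    (tikhonovSolution_eq_pinv_sub h1 h2 h3 h4 ht.ne'
      (isUnit_det_smul_one_add hP hs)).symm) ?_
  simpa using tendsto_const_nhds.sub hcorr

end Tikhonov

theorem ddnm_vanishing_noise_limit_general {m d : ℕ}
    (A : Matrix (Fin m) (Fin d) ℝ) (B : Matrix (Fin d) (Fin m) ℝ)
    (h1 : A * B * A = A) (h2 : B * A * B = B)
    (h3 : (A * B)ᵀ = A * B) (h4 : (B * A)ᵀ = B * A)
    (r : ℝ) (hr : 0 < r) (y : Fin m → ℝ) (D : Fin d → ℝ)
    (f : ℝ → (Fin d → ℝ) → ℝ)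
    (hf : ∀ σ x, f σ x = ∑ i, (y i - A.mulVec x i) ^ 2 + (σ ^ 2 / r ^ 2) * ∑ j, (x j - D j) ^ 2)
    (xstar : ℝ → (Fin d → ℝ))
    (huniq : ∀ σ, 0 < σ → ∀ x, (∀ z, f σ x ≤ f σ z) → x = xstar σ) :
    (∀ σ, 0 < σ → xstar σ =
      D + (r ^ 2 • (Aᵀ * (σ ^ 2 • (1 : Matrix (Fin m) (Fin m) ℝ) + r ^ 2 • (A * Aᵀ))⁻¹)).mulVec
        (y - A.mulVec D)) ∧
    Tendsto xstar (nhdsWithin 0 (Set.Ioi 0))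
      (nhds (B.mulVec y + ((1 : Matrix (Fin d) (Fin d) ℝ) - B * A).mulVec D)) := by
  have hsol : ∀ σ, 0 < σ → xstar σ = tikhonovSolution A y D (σ ^ 2) (r ^ 2) := by
    intro σ hσ
    have hM := isUnit_det_smul_one_add ((posSemidef_self_mul_transpose A).smul (sq_nonneg r))
      (pow_pos hσ 2)
    refine (huniq σ hσ _ fun z => ?_).symm
    simp only [hf, ← tikhonovObjective_eq_sum]
    exact tikhonovObjective_le_of_normal_eq (by positivity)
      (transpose_mulVec_sub_mulVec_tikhonovSolution (pow_pos hr 2).ne' hM) z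
  have hsq : Tendsto (fun σ : ℝ => σ ^ 2) (𝓝[>] 0) (𝓝[>] 0) :=
    tendsto_nhdsWithin_iff.2
      ⟨tendsto_nhdsWithin_of_tendsto_nhds (by simpa using (continuous_pow 2).tendsto (0 : ℝ)),
        eventually_mem_nhdsWithin.mono fun σ hσ => Set.mem_Ioi.2 (pow_pos hσ 2)⟩
  have hlim : B *ᵥ y + (1 - B * A) *ᵥ D = D + B *ᵥ (y - A *ᵥ D) := by
    rw [sub_mulVec, one_mulVec, mulVec_sub, mulVec_mulVec]
    abel
  refine ⟨hsol, hlim ▸ ?_⟩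
  exact ((tendsto_tikhonovSolution h1 h2 h3 h4 (pow_pos hr 2)).comp hsq).congr'
    (eventually_mem_nhdsWithin.mono fun σ hσ => (hsol σ hσ).symm)

/-- **DDNM as the vanishing-noise limit of the isotropic proximal solution.**
If `B` is the Moore–Penrose pseudoinverse of `A` and `x*(σ)` is the unique minimizer of
`‖y − A x‖² + (σ²/r²)‖x − D‖²`, then `x*(σ) = D + r² Aᵀ (σ² I + r² A Aᵀ)⁻¹ (y − A D)` and
`x*(σ) → B y + (I − B A) D` as `σ → 0⁺`. -/
theorem ddnm_vanishing_noise_limit {m d : ℕ}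
    (A : Matrix (Fin m) (Fin d) ℝ) (B : Matrix (Fin d) (Fin m) ℝ)
    (h1 : A * B * A = A) (h2 : B * A * B = B)
    (h3 : (A * B)ᵀ = A * B) (h4 : (B * A)ᵀ = B * A)
    (r : ℝ) (hr : 0 < r) (y : Fin m → ℝ) (D : Fin d → ℝ)
    (f : ℝ → (Fin d → ℝ) → ℝ)
    (hf : ∀ σ x, f σ x = ∑ i, (y i - A.mulVec x i) ^ 2 + (σ ^ 2 / r ^ 2) * ∑ j, (x j - D j) ^ 2)
    (xstar : ℝ → (Fin d → ℝ))
    (hmin : ∀ σ, 0 < σ → ∀ x, f σ (xstar σ) ≤ f σ x)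
    (huniq : ∀ σ, 0 < σ → ∀ x, (∀ z, f σ x ≤ f σ z) → x = xstar σ) :
    (∀ σ, 0 < σ → xstar σ =
      D + (r ^ 2 • (Aᵀ * (σ ^ 2 • (1 : Matrix (Fin m) (Fin m) ℝ) + r ^ 2 • (A * Aᵀ))⁻¹)).mulVec
        (y - A.mulVec D)) ∧
    Tendsto xstar (nhdsWithin 0 (Set.Ioi 0))
      (nhds (B.mulVec y + ((1 : Matrix (Fin d) (Fin d) ℝ) - B * A).mulVec D)) :=
  ddnm_vanishing_noise_limit_general A B h1 h2 h3 h4 r hr y D f hf xstar huniq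
end

section
/- Let X₀ and X be random vectors in ℝ^d on a probability space, with each coordinate of X₀ square-integrable. For measurable functions D : ℝ^d → ℝ^d and r : ℝ^d → ℝ^d with rᵢ(x) > 0 for all i and x, define the Gaussian negative log-likelihood objective L(D, r) = E[ Σ_{i=1}^{d} ( (X₀ᵢ − Dᵢ(X))² / rᵢ(X)² + log rᵢ(X)² ) ] whenever this expectation is defined. Let D*ᵢ(X) be (a version of) the conditional expectation E[X₀ᵢ | X] and let r*ᵢ(X)² = E[(X₀ᵢ − D*ᵢ(X))² | X] be the conditional variance, and assume r*ᵢ(X)² > 0 almost surely and E[|log r*ᵢ(X)²|] < ∞ for each i. Then for every admissible pair (D, r), L(D, r) ≥ L(D*, r*) = E[ Σ_{i=1}^{d} (1 + log r*ᵢ(X)²) ]. (Fixed-point solutions of the variational Gaussian posterior: the optimal diagonal Gaussian approximation of the denoising posterior has mean E[x₀|x_t] and variances E[(x₀ − E[x₀|x_t])² | x_t].) -/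
open MeasureTheory

open Filter

section aux
variable {Ω : Type*} {m : MeasurableSpace Ω} [mΩ : MeasurableSpace Ω] {μ : Measure Ω}

lemma abs_le_sq_add_one' (x : ℝ) : |x| ≤ x ^ 2 + 1 := by
  nlinarith [sq_abs x, abs_nonneg x, sq_nonneg (|x| - 1)]

lemma aux_int_one [IsProbabilityMeasure μ] (hm : m ≤ mΩ)
    (Y s : Ω → ℝ) (hY : Measurable Y) (hs : Measurable[m] s)
    (hYnn : ∀ ω, 0 ≤ Y ω) (hsnn : ∀ ω, 0 ≤ s ω)
    (hYint : Integrable Y μ) (hcond : s =ᵐ[μ] μ[Y|m])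
    (hspos : ∀ᵐ ω ∂μ, 0 < s ω) :
    Integrable (fun ω => Y ω / s ω) μ ∧ ∫ ω, Y ω / s ω ∂μ = 1 := by
  set F : ℕ → Set Ω := fun k => {ω | 1 / ((k : ℝ) + 1) ≤ s ω} with hF
  have hFm : ∀ k, MeasurableSet[m] (F k) := fun k =>
    measurableSet_le measurable_const hs
  have hsm_amb : Measurable s := hs.mono hm le_rfl
  set χ : ℕ → Ω → ℝ := fun k => (F k).indicator (fun _ => (1 : ℝ)) with hχ
  have hχm : ∀ k, Measurable[m] (χ k) := fun k =>
    measurable_const.indicator (hFm k)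
  have hχ01 : ∀ k ω, χ k ω = 0 ∨ χ k ω = 1 := by
    intro k ω
    by_cases h : ω ∈ F k <;> simp [hχ, h]
  have hχnn : ∀ k ω, 0 ≤ χ k ω := by
    intro k ω; rcases hχ01 k ω with h | h <;> rw [h] <;> norm_num
  have hχle : ∀ k ω, χ k ω ≤ 1 := by
    intro k ω; rcases hχ01 k ω with h | h <;> rw [h] <;> norm_num
  have hsposF : ∀ k ω, ω ∈ F k → 0 < s ω := by
    intro k ω hω
    have h1 : (0:ℝ) < 1 / ((k : ℝ) + 1) := by positivity
    exact lt_of_lt_of_le h1 hω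
  set g : ℕ → Ω → ℝ := fun k ω => χ k ω / s ω with hg
  have hgm : ∀ k, Measurable[m] (g k) := fun k => (hχm k).div hs
  have hgs : ∀ k ω, g k ω * s ω = χ k ω := by
    intro k ω
    by_cases h : ω ∈ F k
    · have := (hsposF k ω h).ne'
      show χ k ω / s ω * s ω = χ k ω
      exact div_mul_cancel₀ _ this
    · simp [hg, hχ, h]
  have hgnn : ∀ k ω, 0 ≤ g k ω := fun k ω => div_nonneg (hχnn k ω) (hsnn ω)
  have hgle : ∀ k ω, g k ω ≤ (k : ℝ) + 1 := by
    intro k ω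
    by_cases h : ω ∈ F k
    · have hb : (0:ℝ) < 1 / ((k : ℝ) + 1) := by positivity
      have h2 : 1 / s ω ≤ 1 / (1 / ((k : ℝ) + 1)) :=
        one_div_le_one_div_of_le hb h
      rw [one_div_one_div] at h2
      calc g k ω ≤ 1 / s ω := by
              rw [hg]
              exact (div_le_div_iff_of_pos_right (hsposF k ω h)).mpr (hχle k ω)
        _ ≤ (k : ℝ) + 1 := h2
    · simp [hg, hχ, h]
      positivity
  -- integrability of g k * Y
  have hgY_meas : ∀ k, AEStronglyMeasurable (fun ω => g k ω * Y ω) μ :=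
    fun k => (((hgm k).mono hm le_rfl).mul hY).aestronglyMeasurable
  have hgY_int : ∀ k, Integrable (fun ω => g k ω * Y ω) μ := by
    intro k
    refine (hYint.const_mul ((k : ℝ) + 1)).mono' (hgY_meas k) (ae_of_all _ ?_)
    intro ω
    rw [Real.norm_eq_abs, abs_mul, abs_of_nonneg (hgnn k ω), abs_of_nonneg (hYnn ω)]
    exact mul_le_mul_of_nonneg_right (hgle k ω) (hYnn ω)
  -- value of ∫ g k * Y
  have hval : ∀ k, ∫ ω, g k ω * Y ω ∂μ = (μ (F k)).toReal := by
    intro k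
    have hpull : μ[g k * Y|m] =ᵐ[μ] g k * μ[Y|m] :=
      condExp_mul_of_stronglyMeasurable_left ((hgm k).stronglyMeasurable) (hgY_int k) hYint
    have h1 : ∫ ω, g k ω * Y ω ∂μ = ∫ ω, (μ[g k * Y|m]) ω ∂μ :=
      (integral_condExp hm).symm
    rw [h1, integral_congr_ae hpull]
    have h2 : (g k * μ[Y|m]) =ᵐ[μ] χ k := by
      filter_upwards [hcond] with ω hω
      simp only [Pi.mul_apply]
      rw [← hω, hgs]
    rw [integral_congr_ae h2]
    have : ∫ ω, χ k ω ∂μ = (μ (F k)).toReal • (1:ℝ) :=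
      integral_indicator_const (1:ℝ) (hm _ (hFm k))
    rw [this, smul_eq_mul, mul_one]
  -- monotone family
  have hFmono : ∀ k, F k ⊆ F (k+1) := by
    intro k ω hω
    have hω' : 1 / ((k:ℝ)+1) ≤ s ω := hω
    show (1:ℝ) / ((↑(k+1):ℝ) + 1) ≤ s ω
    refine le_trans ?_ hω'
    push_cast
    exact one_div_le_one_div_of_le (by positivity) (by linarith)
  have hχmono : ∀ ω, Monotone fun k => χ k ω := by
    intro ω
    refine monotone_nat_of_le_succ fun k => ?_
    by_cases h : ω ∈ F k
    · have h2 : ω ∈ F (k+1) := hFmono k h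
      simp [hχ, h, h2]
    · simp [hχ, h]
      by_cases h2 : ω ∈ F (k+1) <;> simp [h2]
  set φ : Ω → ℝ := fun ω => Y ω / s ω with hφ
  have hφnn : ∀ ω, 0 ≤ φ ω := fun ω => div_nonneg (hYnn ω) (hsnn ω)
  have hφmeas : Measurable φ := hY.div hsm_amb
  have hgYφ : ∀ k ω, g k ω * Y ω = χ k ω * φ ω := by
    intro k ω
    rw [hg, hφ]
    rw [div_mul_eq_mul_div, mul_div_assoc]
  have hmemex : ∀ ω, 0 < s ω → ∃ N : ℕ, ω ∈ F N := by
    intro ω hω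
    obtain ⟨N, hN⟩ := exists_nat_ge (1 / s ω)
    refine ⟨N, ?_⟩
    have h1 : 1 / s ω ≤ (N : ℝ) + 1 := by linarith
    have h2 : 1 / ((N:ℝ)+1) ≤ 1 / (1 / s ω) :=
      one_div_le_one_div_of_le (by positivity) h1
    rw [one_div_one_div] at h2
    exact h2
  have hsup : ∀ᵐ ω ∂μ, (⨆ k, ENNReal.ofReal (χ k ω * φ ω)) = ENNReal.ofReal (φ ω) := by
    filter_upwards [hspos] with ω hω
    obtain ⟨N, hN⟩ := hmemex ω hω
    apply le_antisymm
    · refine iSup_le fun k => ENNReal.ofReal_le_ofReal ?_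
      calc χ k ω * φ ω ≤ 1 * φ ω :=
            mul_le_mul_of_nonneg_right (hχle k ω) (hφnn ω)
        _ = φ ω := one_mul _
    · refine le_iSup_of_le N (le_of_eq ?_)
      have : χ N ω = 1 := by simp [hχ, hN]
      rw [this, one_mul]
  have hlin : ∫⁻ ω, ENNReal.ofReal (φ ω) ∂μ = 1 := by
    have hmeas : ∀ k, AEMeasurable (fun ω => ENNReal.ofReal (χ k ω * φ ω)) μ := by
      intro k
      exact (ENNReal.measurable_ofReal.comp
        ((((hχm k).mono hm le_rfl).mul hφmeas))).aemeasurable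
    have hmono : ∀ᵐ ω ∂μ, Monotone fun k => ENNReal.ofReal (χ k ω * φ ω) := by
      refine ae_of_all _ fun ω => ?_
      intro a b hab
      exact ENNReal.ofReal_le_ofReal
        (mul_le_mul_of_nonneg_right (hχmono ω hab) (hφnn ω))
    calc ∫⁻ ω, ENNReal.ofReal (φ ω) ∂μ
        = ∫⁻ ω, ⨆ k, ENNReal.ofReal (χ k ω * φ ω) ∂μ :=
          lintegral_congr_ae (hsup.mono fun ω h => h.symm)
      _ = ⨆ k, ∫⁻ ω, ENNReal.ofReal (χ k ω * φ ω) ∂μ := lintegral_iSup' hmeas hmono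
      _ = ⨆ k, μ (F k) := by
          congr 1; funext k
          have hint : Integrable (fun ω => χ k ω * φ ω) μ :=
            (hgY_int k).congr (ae_of_all _ fun ω => hgYφ k ω)
          rw [← ofReal_integral_eq_lintegral_ofReal hint
            (ae_of_all _ fun ω => mul_nonneg (hχnn k ω) (hφnn ω))]
          have : ∫ ω, χ k ω * φ ω ∂μ = (μ (F k)).toReal := by
            rw [← hval k]
            exact integral_congr_ae (ae_of_all _ fun ω => (hgYφ k ω).symm)
          rw [this, ENNReal.ofReal_toReal (measure_ne_top μ _)]
      _ = μ (⋃ k, F k) := by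
          exact (Directed.measure_iUnion
            ((monotone_nat_of_le_succ hFmono).directed_le)).symm
      _ = 1 := by
          have hae : ∀ᵐ ω ∂μ, ω ∈ ⋃ k, F k := by
            filter_upwards [hspos] with ω hω
            obtain ⟨N, hN⟩ := hmemex ω hω
            exact Set.mem_iUnion.mpr ⟨N, hN⟩
          rw [← measure_univ (μ := μ)]
          exact measure_congr (Filter.eventuallyEq_univ.mpr hae)
  have hφint : Integrable φ μ := by
    refine ⟨hφmeas.aestronglyMeasurable, ?_⟩
    rw [hasFiniteIntegral_iff_norm]
    have : ∀ ω, ENNReal.ofReal ‖φ ω‖ = ENNReal.ofReal (φ ω) := by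
      intro ω; rw [Real.norm_eq_abs, abs_of_nonneg (hφnn ω)]
    simp_rw [this]
    rw [hlin]; exact ENNReal.one_lt_top
  refine ⟨hφint, ?_⟩
  rw [integral_eq_lintegral_of_nonneg_ae (ae_of_all _ hφnn) hφmeas.aestronglyMeasurable,
    hlin, ENNReal.toReal_one]

end aux

section aux2
variable {Ω : Type*} {m : MeasurableSpace Ω} [mΩ : MeasurableSpace Ω] {μ : Measure Ω}

lemma abs_le_sq_add_one (x : ℝ) : |x| ≤ x ^ 2 + 1 := by
  nlinarith [sq_abs x, abs_nonneg x, sq_nonneg (|x| - 1)]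

lemma aux_ineq_core [IsProbabilityMeasure μ] (hm : m ≤ mΩ) {d : ℕ}
    (a dst dd sr ss : Fin d → Ω → ℝ) (χ : Ω → ℝ) (W H : Ω → ℝ)
    (ha : ∀ i, Measurable (a i))
    (hdst : ∀ i, Measurable[m] (dst i)) (hdd : ∀ i, Measurable[m] (dd i))
    (hsr : ∀ i, Measurable[m] (sr i))
    (hχ : Measurable[m] χ) (hχ01 : ∀ ω, χ ω = 0 ∨ χ ω = 1)
    (hsr_pos : ∀ i ω, 0 < sr i ω)
    (hss_pos : ∀ i, ∀ᵐ ω ∂μ, 0 < ss i ω)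
    (C : ℝ) (hC : 0 ≤ C) (hsr_bd : ∀ i ω, χ ω * sr i ω ≤ C)
    (hlog_bd : ∀ i ω, |χ ω * Real.log (sr i ω)| ≤ C)
    (hY'int : ∀ i, Integrable (fun ω => (a i ω - dst i ω) ^ 2) μ)
    (hconds : ∀ i, (fun ω => ss i ω) =ᵐ[μ] μ[fun ω => (a i ω - dst i ω) ^ 2|m])
    (hconda : ∀ i, (fun ω => dst i ω) =ᵐ[μ] μ[fun ω => a i ω|m])
    (hW : W = fun ω => ∑ i, ((a i ω - dd i ω) ^ 2 / sr i ω + Real.log (sr i ω)))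
    (hH : H = fun ω => ∑ i, (1 + Real.log (ss i ω)))
    (hWint : Integrable W μ) :
    ∀ᵐ ω ∂μ, χ ω * H ω ≤ χ ω * (μ[W|m]) ω := by
  have hχnn : ∀ ω, 0 ≤ χ ω := by
    intro ω; rcases hχ01 ω with h | h <;> rw [h] <;> norm_num
  have hχle : ∀ ω, χ ω ≤ 1 := by
    intro ω; rcases hχ01 ω with h | h <;> rw [h] <;> norm_num
  -- ambient measurability
  have hχa : Measurable χ := hχ.mono hm le_rfl
  have hdsta : ∀ i, Measurable (dst i) := fun i => (hdst i).mono hm le_rfl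
  have hdda : ∀ i, Measurable (dd i) := fun i => (hdd i).mono hm le_rfl
  have hsra : ∀ i, Measurable (sr i) := fun i => (hsr i).mono hm le_rfl
  set Y : Fin d → Ω → ℝ := fun i ω => (a i ω - dd i ω) ^ 2 with hYdef
  set Y' : Fin d → Ω → ℝ := fun i ω => (a i ω - dst i ω) ^ 2 with hY'def
  set u : Fin d → Ω → ℝ := fun i ω => χ ω * (Y i ω / sr i ω) with hudef
  set v : Fin d → Ω → ℝ := fun i ω => χ ω * Real.log (sr i ω) with hvdef
  have hYm : ∀ i, Measurable (Y i) := fun i => ((ha i).sub (hdda i)).pow_const 2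
  have hY'm : ∀ i, Measurable (Y' i) := fun i => ((ha i).sub (hdsta i)).pow_const 2
  have hum : ∀ i, Measurable (u i) := fun i => hχa.mul ((hYm i).div (hsra i))
  have hvm : ∀ i, Measurable (v i) := fun i => hχa.mul (hsra i).log
  have hWm : Measurable W := by
    rw [hW]
    exact Finset.measurable_sum _ fun i _ => ((hYm i).div (hsra i)).add (hsra i).log
  have hYnn : ∀ i ω, 0 ≤ Y i ω := fun i ω => sq_nonneg _
  have hunn : ∀ i ω, 0 ≤ u i ω := fun i ω =>
    mul_nonneg (hχnn ω) (div_nonneg (hYnn i ω) (hsr_pos i ω).le)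
  -- integrability chain
  have hχW_int : Integrable (fun ω => χ ω * W ω) μ := by
    refine hWint.abs.mono' ((hχa.mul hWm).aestronglyMeasurable) (ae_of_all _ fun ω => ?_)
    rw [Real.norm_eq_abs, abs_mul, abs_of_nonneg (hχnn ω)]
    calc χ ω * |W ω| ≤ 1 * |W ω| :=
          mul_le_mul_of_nonneg_right (hχle ω) (abs_nonneg _)
      _ = |W ω| := one_mul _
  have hv_int : ∀ i, Integrable (v i) μ := by
    intro i
    exact (integrable_const C).mono' (hvm i).aestronglyMeasurable
      (ae_of_all _ fun ω => by rw [Real.norm_eq_abs]; exact hlog_bd i ω)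
  have hdecomp : ∀ ω, χ ω * W ω = ∑ i, (u i ω + v i ω) := by
    intro ω
    rw [hW]
    rw [Finset.mul_sum]
    exact Finset.sum_congr rfl fun i _ => by rw [hudef, hvdef]; ring
  set G : Ω → ℝ := fun ω => χ ω * W ω - ∑ i, v i ω with hGdef
  have hG_int : Integrable G μ :=
    hχW_int.sub (integrable_finset_sum _ fun i _ => hv_int i)
  have hGu : ∀ ω, G ω = ∑ i, u i ω := by
    intro ω
    rw [hGdef]
    simp only [hdecomp ω, Finset.sum_add_distrib]
    ring
  have hu_int : ∀ i, Integrable (u i) μ := by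
    intro i
    refine hG_int.abs.mono' (hum i).aestronglyMeasurable (ae_of_all _ fun ω => ?_)
    rw [Real.norm_eq_abs, abs_of_nonneg (hunn i ω)]
    calc u i ω ≤ ∑ j, u j ω :=
          Finset.single_le_sum (fun j _ => hunn j ω) (Finset.mem_univ i)
      _ = G ω := (hGu ω).symm
      _ ≤ |G ω| := le_abs_self _
  have hχY_eq : ∀ i ω, χ ω * Y i ω = (χ ω * sr i ω) * u i ω := by
    intro i ω
    simp only [hudef]
    rcases hχ01 ω with h | h
    · rw [h]; ring
    · rw [h]
      have hne := (hsr_pos i ω).ne'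
      field_simp
  have hχY_int : ∀ i, Integrable (fun ω => χ ω * Y i ω) μ := by
    intro i
    refine ((hu_int i).const_mul C).mono'
      ((hχa.mul (hYm i)).aestronglyMeasurable) (ae_of_all _ fun ω => ?_)
    rw [Real.norm_eq_abs, abs_of_nonneg (mul_nonneg (hχnn ω) (hYnn i ω)), hχY_eq i ω]
    exact mul_le_mul_of_nonneg_right (hsr_bd i ω) (hunn i ω)
  have hχY'_int : ∀ i, Integrable (fun ω => χ ω * Y' i ω) μ := by
    intro i
    refine (hY'int i).mono' ((hχa.mul (hY'm i)).aestronglyMeasurable)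
      (ae_of_all _ fun ω => ?_)
    rw [Real.norm_eq_abs, abs_of_nonneg (mul_nonneg (hχnn ω) (sq_nonneg _))]
    calc χ ω * Y' i ω ≤ 1 * Y' i ω :=
          mul_le_mul_of_nonneg_right (hχle ω) (sq_nonneg _)
      _ = (a i ω - dst i ω) ^ 2 := by rw [one_mul]
  have hadst_int : ∀ i, Integrable (fun ω => a i ω - dst i ω) μ := by
    intro i
    refine ((hY'int i).add (integrable_const 1)).mono'
      (((ha i).sub (hdsta i)).aestronglyMeasurable) (ae_of_all _ fun ω => ?_)
    rw [Real.norm_eq_abs]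
    exact abs_le_sq_add_one _
  have hdst_int : ∀ i, Integrable (dst i) μ := fun i =>
    integrable_condExp.congr (hconda i).symm
  have ha_int : ∀ i, Integrable (a i) μ := by
    intro i
    have h2 := (hadst_int i).add (hdst_int i)
    refine h2.congr (ae_of_all _ fun ω => ?_)
    simp
  -- quadratic expansion terms
  set p3 : Fin d → Ω → ℝ := fun i ω => χ ω * (dst i ω - dd i ω) ^ 2 with hp3def
  have hp3m : ∀ i, Measurable[m] (p3 i) :=
    fun i => hχ.mul (((hdst i).sub (hdd i)).pow_const 2)
  have hp3nn : ∀ i ω, 0 ≤ p3 i ω := fun i ω => mul_nonneg (hχnn ω) (sq_nonneg _)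
  have hp3_int : ∀ i, Integrable (p3 i) μ := by
    intro i
    refine (((hY'int i).const_mul 2).add ((hχY_int i).const_mul 2)).mono'
      (((hp3m i).mono hm le_rfl).aestronglyMeasurable) (ae_of_all _ fun ω => ?_)
    rw [Real.norm_eq_abs, abs_of_nonneg (hp3nn i ω)]
    simp only [hp3def, hYdef, Pi.add_apply]
    rcases hχ01 ω with h | h
    · rw [h]
      simp only [zero_mul, mul_zero]
      positivity
    · rw [h]
      simp only [one_mul, mul_one]
      nlinarith [sq_nonneg (a i ω - dst i ω + (a i ω - dd i ω)),
        sq_nonneg (a i ω - dst i ω - (a i ω - dd i ω))]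
  set f2 : Fin d → Ω → ℝ := fun i ω => 2 * (χ ω * (dst i ω - dd i ω)) with hf2def
  have hf2m : ∀ i, Measurable[m] (f2 i) :=
    fun i => (hχ.mul ((hdst i).sub (hdd i))).const_mul 2
  have hf2g_int : ∀ i, Integrable (fun ω => f2 i ω * (a i ω - dst i ω)) μ := by
    intro i
    refine ((hp3_int i).add (hY'int i)).mono'
      ((((hf2m i).mono hm le_rfl)).mul ((ha i).sub (hdsta i))).aestronglyMeasurable
      (ae_of_all _ fun ω => ?_)
    simp only [Real.norm_eq_abs, hf2def, hp3def, Pi.add_apply]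
    rcases hχ01 ω with h | h
    · rw [h]
      simp only [mul_zero, zero_mul, abs_zero]
      positivity
    · rw [h]
      simp only [one_mul, mul_one]
      rw [abs_le]
      constructor <;> nlinarith [sq_nonneg (dst i ω - dd i ω + (a i ω - dst i ω)),
        sq_nonneg (dst i ω - dd i ω - (a i ω - dst i ω))]
  -- expansion identity
  have hexp : ∀ i, (fun ω => χ ω * Y i ω)
      = fun ω => χ ω * Y' i ω + (f2 i ω * (a i ω - dst i ω) + p3 i ω) := by
    intro i
    funext ω
    simp only [hYdef, hY'def, hf2def, hp3def]
    rcases hχ01 ω with h | h <;> rw [h] <;> ring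
  -- conditional expectations
  have hc1 : ∀ i, μ[fun ω => χ ω * Y' i ω|m] =ᵐ[μ] fun ω => χ ω * ss i ω := by
    intro i
    have hpull : μ[χ * Y' i|m] =ᵐ[μ] χ * μ[Y' i|m] :=
      condExp_mul_of_stronglyMeasurable_left hχ.stronglyMeasurable (hχY'_int i) (hY'int i)
    filter_upwards [hpull, hconds i] with ω h1 h2
    show (μ[χ * Y' i|m]) ω = _
    rw [h1]
    show χ ω * (μ[Y' i|m]) ω = _
    rw [← h2]
  have hcg0 : ∀ i, μ[fun ω => a i ω - dst i ω|m] =ᵐ[μ] fun _ => (0:ℝ) := by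
    intro i
    have hsub : μ[fun ω => a i ω - dst i ω|m]
        =ᵐ[μ] μ[fun ω => a i ω|m] - μ[fun ω => dst i ω|m] :=
      condExp_sub (ha_int i) (hdst_int i) _
    have hdst_ce : μ[fun ω => dst i ω|m] = fun ω => dst i ω :=
      condExp_of_stronglyMeasurable hm (hdst i).stronglyMeasurable (hdst_int i)
    filter_upwards [hsub, hconda i] with ω h1 h2
    rw [h1]
    show (μ[fun ω => a i ω|m]) ω - (μ[fun ω => dst i ω|m]) ω = 0
    rw [hdst_ce, ← h2]
    ring
  have hc2 : ∀ i, μ[fun ω => f2 i ω * (a i ω - dst i ω)|m] =ᵐ[μ] fun _ => (0:ℝ) := by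
    intro i
    have hpull : μ[f2 i * fun ω => a i ω - dst i ω|m]
        =ᵐ[μ] f2 i * μ[fun ω => a i ω - dst i ω|m] :=
      condExp_mul_of_stronglyMeasurable_left (hf2m i).stronglyMeasurable
        (hf2g_int i) (hadst_int i)
    filter_upwards [hpull, hcg0 i] with ω h1 h2
    show (μ[f2 i * fun ω => a i ω - dst i ω|m]) ω = 0
    rw [h1]
    show f2 i ω * (μ[fun ω => a i ω - dst i ω|m]) ω = 0
    rw [h2]; ring
  have hc3 : ∀ i, μ[p3 i|m] = p3 i := fun i =>
    condExp_of_stronglyMeasurable hm (hp3m i).stronglyMeasurable (hp3_int i)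
  have hcY : ∀ i, μ[fun ω => χ ω * Y i ω|m]
      =ᵐ[μ] fun ω => χ ω * ss i ω + p3 i ω := by
    intro i
    rw [hexp i]
    have hadd : μ[(fun ω => χ ω * Y' i ω) + fun ω => f2 i ω * (a i ω - dst i ω) + p3 i ω|m]
        =ᵐ[μ] μ[fun ω => χ ω * Y' i ω|m] + μ[fun ω => f2 i ω * (a i ω - dst i ω) + p3 i ω|m] :=
      condExp_add (hχY'_int i) ((hf2g_int i).add (hp3_int i)) _
    have hadd2 : μ[fun ω => f2 i ω * (a i ω - dst i ω) + p3 i ω|m]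
        =ᵐ[μ] μ[fun ω => f2 i ω * (a i ω - dst i ω)|m] + μ[p3 i|m] :=
      condExp_add (hf2g_int i) (hp3_int i) _
    have heq : (fun ω => χ ω * Y' i ω + (f2 i ω * (a i ω - dst i ω) + p3 i ω))
        = (fun ω => χ ω * Y' i ω) + fun ω => f2 i ω * (a i ω - dst i ω) + p3 i ω := rfl
    rw [heq]
    filter_upwards [hadd, hadd2, hc1 i, hc2 i] with ω h1 h2 h3 h4
    rw [h1]
    show (μ[fun ω => χ ω * Y' i ω|m]) ω
      + (μ[fun ω => f2 i ω * (a i ω - dst i ω) + p3 i ω|m]) ω = _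
    rw [h2, h3]
    show χ ω * ss i ω + ((μ[fun ω => f2 i ω * (a i ω - dst i ω)|m]) ω + (μ[p3 i|m]) ω) = _
    rw [h4, hc3 i]
    ring
  -- pull out χ/sr
  set g2 : Fin d → Ω → ℝ := fun i ω => χ ω / sr i ω with hg2def
  have hg2m : ∀ i, Measurable[m] (g2 i) := fun i => hχ.div (hsr i)
  have hg2nn : ∀ i ω, 0 ≤ g2 i ω := fun i ω =>
    div_nonneg (hχnn ω) (hsr_pos i ω).le
  have hu_eq : ∀ i, u i = g2 i * fun ω => χ ω * Y i ω := by
    intro i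
    funext ω
    show u i ω = g2 i ω * (χ ω * Y i ω)
    simp only [hudef, hg2def]
    rcases hχ01 ω with h | h
    · rw [h]; ring
    · rw [h]
      have hne := (hsr_pos i ω).ne'
      field_simp
  have hcu : ∀ i, μ[u i|m] =ᵐ[μ] fun ω => g2 i ω * (χ ω * ss i ω + p3 i ω) := by
    intro i
    have hpull : μ[g2 i * fun ω => χ ω * Y i ω|m]
        =ᵐ[μ] g2 i * μ[fun ω => χ ω * Y i ω|m] :=
      condExp_mul_of_stronglyMeasurable_left (hg2m i).stronglyMeasurable
        (by rw [← hu_eq i]; exact hu_int i) (hχY_int i)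
    rw [hu_eq i]
    filter_upwards [hpull, hcY i] with ω h1 h2
    rw [h1]
    show g2 i ω * (μ[fun ω => χ ω * Y i ω|m]) ω = _
    rw [h2]
  have hcv : ∀ i, μ[v i|m] = v i := fun i =>
    condExp_of_stronglyMeasurable hm (hχ.mul (hsr i).log).stronglyMeasurable (hv_int i)
  -- assemble
  have hχW_eq : (fun ω => χ ω * W ω) = fun ω => ∑ i, (u i ω + v i ω) := funext hdecomp
  have hcsum : μ[fun ω => χ ω * W ω|m] =ᵐ[μ] fun ω => ∑ i, ((μ[u i|m]) ω + v i ω) := by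
    rw [hχW_eq]
    set w : Fin d → Ω → ℝ := fun i ω => u i ω + v i ω with hwdef
    have hweq : (fun ω => ∑ i, (u i ω + v i ω)) = ∑ i, w i := by
      funext ω
      rw [Finset.sum_apply]
    rw [hweq]
    have h0 := condExp_finsetSum (μ := μ) (m := m) (f := w) (s := Finset.univ)
      (fun i _ => (hu_int i).add (hv_int i))
    refine h0.trans ?_
    have h2' : ∀ᵐ ω ∂μ, ∀ i, (μ[w i|m]) ω = (μ[u i|m]) ω + v i ω := by
      rw [ae_all_iff]
      intro i
      have h2 : μ[w i|m] =ᵐ[μ] μ[u i|m] + μ[v i|m] :=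
        condExp_add (hu_int i) (hv_int i) _
      filter_upwards [h2] with ω hω
      rw [hω]
      show (μ[u i|m]) ω + (μ[v i|m]) ω = _
      rw [hcv i]
    filter_upwards [h2'] with ω hω
    rw [Finset.sum_apply]
    exact Finset.sum_congr rfl fun i _ => hω i
  have hχml : μ[fun ω => χ ω * W ω|m] =ᵐ[μ] fun ω => χ ω * (μ[W|m]) ω := by
    have hpull : μ[χ * W|m] =ᵐ[μ] χ * μ[W|m] :=
      condExp_mul_of_stronglyMeasurable_left hχ.stronglyMeasurable hχW_int hWint
    exact hpull
  have hcuall : ∀ᵐ ω ∂μ, ∀ i, (μ[u i|m]) ω = g2 i ω * (χ ω * ss i ω + p3 i ω) := by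
    rw [ae_all_iff]; exact fun i => hcu i
  have hsspos_all : ∀ᵐ ω ∂μ, ∀ i, 0 < ss i ω := by
    rw [ae_all_iff]; exact hss_pos
  filter_upwards [hcsum, hχml, hcuall, hsspos_all] with ω h1 h2 h3 h4
  rw [← h2, h1]
  rcases hχ01 ω with h | h
  · rw [hH, h]
    have hvz : ∀ i, v i ω = 0 := by intro i; rw [hvdef]; simp [h]
    have hg2z : ∀ i, g2 i ω = 0 := by intro i; rw [hg2def]; simp [h]
    rw [zero_mul]
    refine Finset.sum_nonneg fun i _ => ?_
    rw [h3 i, hg2z i, hvz i]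
    simp
  · rw [hH, h, one_mul]
    refine Finset.sum_le_sum fun i _ => ?_
    rw [h3 i]
    have hkey : 1 + Real.log (ss i ω) ≤ ss i ω / sr i ω + Real.log (sr i ω) := by
      have hlog : Real.log (ss i ω / sr i ω) ≤ ss i ω / sr i ω - 1 :=
        Real.log_le_sub_one_of_pos (div_pos (h4 i) (hsr_pos i ω))
      rw [Real.log_div (h4 i).ne' (hsr_pos i ω).ne'] at hlog
      linarith
    calc 1 + Real.log (ss i ω)
        ≤ ss i ω / sr i ω + Real.log (sr i ω) := hkey
      _ ≤ g2 i ω * (χ ω * ss i ω + p3 i ω) + v i ω := by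
          have hg2v : g2 i ω = 1 / sr i ω := by rw [hg2def]; simp [h]
          have hvv : v i ω = Real.log (sr i ω) := by rw [hvdef]; simp [h]
          have hnn : 0 ≤ p3 i ω / sr i ω :=
            div_nonneg (hp3nn i ω) (hsr_pos i ω).le
          have heq1 : g2 i ω * (χ ω * ss i ω + p3 i ω)
              = ss i ω / sr i ω + p3 i ω / sr i ω := by
            rw [hg2v, h]; ring
          rw [heq1, hvv]
          linarith

end aux2


/-- **Fixed-point solutions of the variational diagonal Gaussian posterior.**
The Gaussian negative log-likelihood objective
`L(D, r) = E[Σᵢ ((X₀ᵢ − Dᵢ(X))²/rᵢ(X)² + log rᵢ(X)²)]` is minimized by the conditional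
mean `D*` and conditional variance `r*²`, with `L(D*, r*) = E[Σᵢ (1 + log r*ᵢ(X)²)]`. -/
theorem variational_gaussian_posterior_fixed_point {d : ℕ} {Ω : Type*} [MeasurableSpace Ω]
    (μ : Measure Ω) [IsProbabilityMeasure μ]
    (X₀ X : Ω → (Fin d → ℝ)) (hX₀ : Measurable X₀) (hX : Measurable X)
    (hsq : ∀ i, Integrable (fun ω => (X₀ ω i) ^ 2) μ)
    (Dstar rstar : (Fin d → ℝ) → (Fin d → ℝ))
    (hDstar_meas : Measurable Dstar) (hrstar_meas : Measurable rstar)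
    (hDstar : ∀ i, (fun ω => Dstar (X ω) i) =ᵐ[μ]
      μ[fun ω => X₀ ω i | MeasurableSpace.comap X inferInstance])
    (hrstar : ∀ i, (fun ω => (rstar (X ω) i) ^ 2) =ᵐ[μ]
      μ[fun ω => (X₀ ω i - Dstar (X ω) i) ^ 2 | MeasurableSpace.comap X inferInstance])
    (hrstar_pos : ∀ i, ∀ᵐ ω ∂μ, 0 < (rstar (X ω) i) ^ 2)
    (hrstar_log : ∀ i, Integrable (fun ω => |Real.log ((rstar (X ω) i) ^ 2)|) μ)
    (D r : (Fin d → ℝ) → (Fin d → ℝ)) (hD_meas : Measurable D) (hr_meas : Measurable r)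
    (hr_pos : ∀ x i, 0 < r x i)
    (hint : Integrable (fun ω =>
      ∑ i, ((X₀ ω i - D (X ω) i) ^ 2 / (r (X ω) i) ^ 2 + Real.log ((r (X ω) i) ^ 2))) μ) :
    (∫ ω, ∑ i, ((X₀ ω i - D (X ω) i) ^ 2 / (r (X ω) i) ^ 2
        + Real.log ((r (X ω) i) ^ 2)) ∂μ)
      ≥ (∫ ω, ∑ i, ((X₀ ω i - Dstar (X ω) i) ^ 2 / (rstar (X ω) i) ^ 2
        + Real.log ((rstar (X ω) i) ^ 2)) ∂μ) ∧
    (∫ ω, ∑ i, ((X₀ ω i - Dstar (X ω) i) ^ 2 / (rstar (X ω) i) ^ 2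
        + Real.log ((rstar (X ω) i) ^ 2)) ∂μ)
      = ∫ ω, ∑ i, (1 + Real.log ((rstar (X ω) i) ^ 2)) ∂μ := by
  
  classical
  have hm : MeasurableSpace.comap X inferInstance ≤ (inferInstance : MeasurableSpace Ω) :=
    hX.comap_le
  -- basic measurability
  have hXm : Measurable[MeasurableSpace.comap X inferInstance] X :=
    comap_measurable X
  have ha : ∀ i, Measurable (fun ω => X₀ ω i) := fun i =>
    (measurable_pi_apply i).comp hX₀
  have hdstm : ∀ i, Measurable[MeasurableSpace.comap X inferInstance]
      (fun ω => Dstar (X ω) i) := fun i =>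
    (measurable_pi_apply i).comp (hDstar_meas.comp hXm)
  have hddm : ∀ i, Measurable[MeasurableSpace.comap X inferInstance]
      (fun ω => D (X ω) i) := fun i =>
    (measurable_pi_apply i).comp (hD_meas.comp hXm)
  have hsrm : ∀ i, Measurable[MeasurableSpace.comap X inferInstance]
      (fun ω => (r (X ω) i) ^ 2) := fun i =>
    ((measurable_pi_apply i).comp (hr_meas.comp hXm)).pow_const 2
  have hssm : ∀ i, Measurable[MeasurableSpace.comap X inferInstance]
      (fun ω => (rstar (X ω) i) ^ 2) := fun i =>
    ((measurable_pi_apply i).comp (hrstar_meas.comp hXm)).pow_const 2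
  have hssa : ∀ i, Measurable (fun ω => (rstar (X ω) i) ^ 2) := fun i =>
    (hssm i).mono hm le_rfl
  -- integrability of (X₀ - Dstar(X))²
  have hY'int : ∀ i, Integrable (fun ω => (X₀ ω i - Dstar (X ω) i) ^ 2) μ := by
    intro i
    by_contra hni
    have h0 : μ[fun ω => (X₀ ω i - Dstar (X ω) i) ^ 2
        | MeasurableSpace.comap X inferInstance] = 0 := condExp_of_not_integrable hni
    have h1 := hrstar i
    rw [h0] at h1
    have hcontra : ∀ᵐ ω ∂μ, False := by
      filter_upwards [h1, hrstar_pos i] with ω hω h2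
      rw [hω] at h2
      simp at h2
    rw [ae_iff] at hcontra
    simp [measure_univ] at hcontra
  -- integrability of log rstar²
  have hlog_int : ∀ i, Integrable (fun ω => Real.log ((rstar (X ω) i) ^ 2)) μ := by
    intro i
    refine (hrstar_log i).mono' ((hssa i).log.aestronglyMeasurable)
      (ae_of_all _ fun ω => ?_)
    rw [Real.norm_eq_abs]
  -- the equality part per coordinate
  have heq1 : ∀ i, Integrable
      (fun ω => (X₀ ω i - Dstar (X ω) i) ^ 2 / (rstar (X ω) i) ^ 2) μ
      ∧ ∫ ω, (X₀ ω i - Dstar (X ω) i) ^ 2 / (rstar (X ω) i) ^ 2 ∂μ = 1 := by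
    intro i
    exact aux_int_one hm (fun ω => (X₀ ω i - Dstar (X ω) i) ^ 2)
      (fun ω => (rstar (X ω) i) ^ 2)
      (((ha i).sub ((hdstm i).mono hm le_rfl)).pow_const 2) (hssm i)
      (fun ω => sq_nonneg _) (fun ω => sq_nonneg _)
      (hY'int i) (hrstar i) (hrstar_pos i)
  have hsplit : ∫ ω, ∑ i, ((X₀ ω i - Dstar (X ω) i) ^ 2 / (rstar (X ω) i) ^ 2
        + Real.log ((rstar (X ω) i) ^ 2)) ∂μ
      = ∑ i : Fin d, (1 + ∫ ω, Real.log ((rstar (X ω) i) ^ 2) ∂μ) := by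
    rw [integral_finset_sum Finset.univ
      (f := fun (i : Fin d) ω => (X₀ ω i - Dstar (X ω) i) ^ 2 / (rstar (X ω) i) ^ 2
        + Real.log ((rstar (X ω) i) ^ 2))
      (fun i _ => ((heq1 i).1).add (hlog_int i))]
    refine Finset.sum_congr rfl fun i _ => ?_
    rw [integral_add (heq1 i).1 (hlog_int i), (heq1 i).2]
  have hH_eq : ∫ ω, ∑ i, (1 + Real.log ((rstar (X ω) i) ^ 2)) ∂μ
      = ∑ i : Fin d, (1 + ∫ ω, Real.log ((rstar (X ω) i) ^ 2) ∂μ) := by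
    rw [integral_finset_sum Finset.univ
      (f := fun (i : Fin d) ω => (1:ℝ) + Real.log ((rstar (X ω) i) ^ 2))
      (fun i _ => (integrable_const 1).add (hlog_int i))]
    refine Finset.sum_congr rfl fun i _ => ?_
    rw [integral_add (integrable_const 1) (hlog_int i)]
    simp
  have heqpart : ∫ ω, ∑ i, ((X₀ ω i - Dstar (X ω) i) ^ 2 / (rstar (X ω) i) ^ 2
        + Real.log ((rstar (X ω) i) ^ 2)) ∂μ
      = ∫ ω, ∑ i, (1 + Real.log ((rstar (X ω) i) ^ 2)) ∂μ :=
    hsplit.trans hH_eq.symm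
  refine ⟨?_, heqpart⟩
  rw [heqpart]
  -- inequality part
  have hH_int : Integrable (fun ω => ∑ i, (1 + Real.log ((rstar (X ω) i) ^ 2))) μ :=
    integrable_finset_sum _ (fun i _ => (integrable_const 1).add (hlog_int i))
  -- the indicator sets
  have hTmeas : ∀ k : ℕ, MeasurableSet {x : Fin d → ℝ |
      ∀ i, 1 / ((k : ℝ) + 1) ≤ (r x i) ^ 2 ∧ (r x i) ^ 2 ≤ (k : ℝ) + 1} := by
    intro k
    have heq : {x : Fin d → ℝ |
        ∀ i, 1 / ((k : ℝ) + 1) ≤ (r x i) ^ 2 ∧ (r x i) ^ 2 ≤ (k : ℝ) + 1}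
        = ⋂ i, {x | 1 / ((k : ℝ) + 1) ≤ (r x i) ^ 2 ∧ (r x i) ^ 2 ≤ (k : ℝ) + 1} := by
      ext x; simp [Set.mem_iInter]
    rw [heq]
    refine MeasurableSet.iInter fun i => ?_
    have hri : Measurable fun x : Fin d → ℝ => (r x i) ^ 2 :=
      ((measurable_pi_apply i).comp hr_meas).pow_const 2
    exact (measurableSet_le measurable_const hri).inter
      (measurableSet_le hri measurable_const)
  set E : ℕ → Set Ω := fun k => X ⁻¹' {x : Fin d → ℝ |
      ∀ i, 1 / ((k : ℝ) + 1) ≤ (r x i) ^ 2 ∧ (r x i) ^ 2 ≤ (k : ℝ) + 1} with hEdef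
  have hEm : ∀ k, MeasurableSet[MeasurableSpace.comap X inferInstance] (E k) :=
    fun k => ⟨_, hTmeas k, rfl⟩
  set χ : ℕ → Ω → ℝ := fun k => (E k).indicator (fun _ => (1 : ℝ)) with hχdef
  have hχm : ∀ k, Measurable[MeasurableSpace.comap X inferInstance] (χ k) :=
    fun k => measurable_const.indicator (hEm k)
  have hχ01 : ∀ k ω, χ k ω = 0 ∨ χ k ω = 1 := by
    intro k ω
    by_cases h : ω ∈ E k <;> simp [hχdef, h]
  have hker : ∀ k : ℕ, ∀ᵐ ω ∂μ,
      χ k ω * (∑ i, (1 + Real.log ((rstar (X ω) i) ^ 2)))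
      ≤ χ k ω * (μ[fun ω => ∑ i, ((X₀ ω i - D (X ω) i) ^ 2 / (r (X ω) i) ^ 2
          + Real.log ((r (X ω) i) ^ 2)) | MeasurableSpace.comap X inferInstance]) ω := by
    intro k
    refine aux_ineq_core hm (fun i ω => X₀ ω i) (fun i ω => Dstar (X ω) i)
      (fun i ω => D (X ω) i) (fun i ω => (r (X ω) i) ^ 2)
      (fun i ω => (rstar (X ω) i) ^ 2) (χ k) _ _
      ha hdstm hddm hsrm (hχm k) (hχ01 k)
      (fun i ω => pow_pos (hr_pos (X ω) i) 2) hrstar_pos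
      ((k : ℝ) + 1) (by positivity) ?_ ?_ hY'int hrstar hDstar rfl rfl hint
    · -- χ * sr ≤ k+1
      intro i ω
      by_cases h : ω ∈ E k
      · have h2 := (h i).2
        have h1 : χ k ω = 1 := by simp [hχdef, h]
        rw [h1, one_mul]
        exact h2
      · have h1 : χ k ω = 0 := by simp [hχdef, h]
        rw [h1, zero_mul]
        positivity
    · -- |χ * log sr| ≤ k+1
      intro i ω
      by_cases h : ω ∈ E k
      · have hlow := (h i).1
        have hhigh := (h i).2
        have h1 : χ k ω = 1 := by simp [hχdef, h]
        rw [h1, one_mul]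
        have hpos : (0:ℝ) < (r (X ω) i) ^ 2 := pow_pos (hr_pos (X ω) i) 2
        have hub : Real.log ((r (X ω) i) ^ 2) ≤ Real.log ((k : ℝ) + 1) :=
          Real.log_le_log hpos hhigh
        have hlb : Real.log (1 / ((k : ℝ) + 1)) ≤ Real.log ((r (X ω) i) ^ 2) :=
          Real.log_le_log (by positivity) hlow
        rw [Real.log_div one_ne_zero (by positivity), Real.log_one] at hlb
        have hlog_le : Real.log ((k : ℝ) + 1) ≤ (k : ℝ) + 1 := by
          have := Real.log_le_sub_one_of_pos (x := (k : ℝ) + 1) (by positivity)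
          linarith
        rw [abs_le]
        constructor <;> linarith
      · have h1 : χ k ω = 0 := by simp [hχdef, h]
        rw [h1, zero_mul, abs_zero]
        positivity
  have hallk : ∀ᵐ ω ∂μ, ∀ k : ℕ,
      χ k ω * (∑ i, (1 + Real.log ((rstar (X ω) i) ^ 2)))
      ≤ χ k ω * (μ[fun ω => ∑ i, ((X₀ ω i - D (X ω) i) ^ 2 / (r (X ω) i) ^ 2
          + Real.log ((r (X ω) i) ^ 2)) | MeasurableSpace.comap X inferInstance]) ω :=
    ae_all_iff.mpr hker
  have hex : ∀ ω, ∃ k : ℕ, χ k ω = 1 := by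
    intro ω
    choose N hN using fun i : Fin d =>
      exists_nat_ge (max (1 / (r (X ω) i) ^ 2) ((r (X ω) i) ^ 2))
    refine ⟨Finset.univ.sup N, ?_⟩
    have hmem : ω ∈ E (Finset.univ.sup N) := by
      intro i
      have hNi : (N i : ℝ) ≤ ((Finset.univ.sup N : ℕ) : ℝ) :=
        Nat.cast_le.mpr (Finset.le_sup (Finset.mem_univ i))
      have hpos : (0:ℝ) < (r (X ω) i) ^ 2 := pow_pos (hr_pos (X ω) i) 2
      have h1 : 1 / (r (X ω) i) ^ 2 ≤ (N i : ℝ) :=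
        le_trans (le_max_left _ _) (hN i)
      have h2 : (r (X ω) i) ^ 2 ≤ (N i : ℝ) :=
        le_trans (le_max_right _ _) (hN i)
      constructor
      · rw [div_le_iff₀ hpos] at h1
        rw [div_le_iff₀ (by positivity : (0:ℝ) < ((Finset.univ.sup N : ℕ) : ℝ) + 1)]
        have h4 : (N i : ℝ) * (r (X ω) i) ^ 2
            ≤ (((Finset.univ.sup N : ℕ) : ℝ) + 1) * (r (X ω) i) ^ 2 :=
          mul_le_mul_of_nonneg_right (by linarith) hpos.le
        nlinarith
      · linarith
    simp [hχdef, hmem]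
  have hae : (fun ω => ∑ i, (1 + Real.log ((rstar (X ω) i) ^ 2)))
      ≤ᵐ[μ] μ[fun ω => ∑ i, ((X₀ ω i - D (X ω) i) ^ 2 / (r (X ω) i) ^ 2
          + Real.log ((r (X ω) i) ^ 2)) | MeasurableSpace.comap X inferInstance] := by
    filter_upwards [hallk] with ω hω
    obtain ⟨k, hk⟩ := hex ω
    have := hω k
    rw [hk, one_mul, one_mul] at this
    exact this
  have h1 : ∫ ω, ∑ i, ((X₀ ω i - D (X ω) i) ^ 2 / (r (X ω) i) ^ 2
        + Real.log ((r (X ω) i) ^ 2)) ∂μ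
      = ∫ ω, (μ[fun ω => ∑ i, ((X₀ ω i - D (X ω) i) ^ 2 / (r (X ω) i) ^ 2
          + Real.log ((r (X ω) i) ^ 2)) | MeasurableSpace.comap X inferInstance]) ω ∂μ :=
    (integral_condExp hm).symm
  rw [ge_iff_le, h1]
  exact integral_mono_ae hH_int integrable_condExp hae
end

section
/- Let X₀ and X be random vectors in ℝ^d with each coordinate of X₀ square-integrable, let a, b ∈ ℝ and λ > 0, and define μ̃(x, x₀) = a·x₀ + b·x. For measurable functions m : ℝ^d → ℝ^d and v : ℝ^d → ℝ^d with vᵢ(x) > 0 for all i, x, define L(m, v) = E[ Σ_{i=1}^{d} ( log vᵢ(X)² + ( (μ̃(X, X₀)ᵢ − mᵢ(X))² + λ² ) / vᵢ(X)² ) ] whenever this expectation is defined. Let m*ᵢ(X) = a·E[X₀ᵢ | X] + b·Xᵢ and v*ᵢ(X)² = λ² + a²·E[(X₀ᵢ − E[X₀ᵢ|X])² | X], and assume E[|log v*ᵢ(X)²|] < ∞ for each i. Then L(m, v) ≥ L(m*, v*) for every admissible pair (m, v). (Fixed-point solutions of DDPM: the optimal reverse mean is μ̃ evaluated at the posterior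 mean, and the optimal reverse variances are v*² = λ² + a²·r*² where r*² are the optimal posterior variances; in DDPM notation a = √(ᾱ_{t−1}) − √(β̄_{t−1} − λ²)·√(ᾱ_t/β̄_t) and b = √((β̄_{t−1} − λ²)/β̄_t).) -/
open MeasureTheory

section
variable {Ω : Type*} {𝒢 : MeasurableSpace Ω} [m0 : MeasurableSpace Ω] {μ : Measure Ω}

private lemma abs_mul_le_half (x y : ℝ) : |x * y| ≤ (x ^ 2 + y ^ 2) / 2 := by
  rw [abs_le]
  constructor
  · nlinarith [sq_nonneg (x + y)]
  · nlinarith [sq_nonneg (x - y)]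

private lemma log_add_one_le (s w : ℝ) (hs : 0 < s) (hw : 0 < w) :
    Real.log s + 1 ≤ -Real.log w + s * w := by
  have h := Real.log_le_sub_one_of_pos (mul_pos hs hw)
  rw [Real.log_mul hs.ne' hw.ne'] at h
  linarith

private lemma trunc_le (lam h q : ℝ) (hlam : 0 < lam) (hh : 0 < h) (hq : 0 ≤ q) :
    -Real.log (min h (lam ^ 2)⁻¹) + (q + lam ^ 2) * min h (lam ^ 2)⁻¹
      ≤ -Real.log h + (q + lam ^ 2) * h := by
  rcases le_total h (lam ^ 2)⁻¹ with hc | hc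
  · rw [min_eq_left hc]
  · rw [min_eq_right hc]
    have hl2 : (0:ℝ) < lam ^ 2 := by positivity
    have h1 : Real.log (h * lam ^ 2) ≤ h * lam ^ 2 - 1 :=
      Real.log_le_sub_one_of_pos (by positivity)
    rw [Real.log_mul hh.ne' hl2.ne'] at h1
    have h2 : Real.log ((lam:ℝ) ^ 2)⁻¹ = -Real.log (lam ^ 2) := Real.log_inv _
    have h3 : lam ^ 2 * ((lam:ℝ) ^ 2)⁻¹ = 1 := mul_inv_cancel₀ hl2.ne'
    nlinarith [mul_nonneg hq (sub_nonneg.mpr hc)]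

private lemma condexp_memL2 [IsProbabilityMeasure μ] (hm : 𝒢 ≤ m0)
    {f : Ω → ℝ} (hf : MemLp f 2 μ) : MemLp (μ[f|𝒢]) 2 μ := by
  have hint : Integrable f μ := hf.integrable one_le_two
  set F : Lp ℝ 2 μ := hf.toLp f with hF
  have heq : ((condExpL2 ℝ ℝ hm F : lpMeas ℝ ℝ 𝒢 2 μ) : Ω → ℝ) =ᵐ[μ] μ[f|𝒢] := by
    refine ae_eq_condExp_of_forall_setIntegral_eq hm hint (fun s _ hs => ?_)
      (fun s hs hμs => ?_) ?_
    · exact integrableOn_condExpL2_of_measure_ne_top hm hs.ne F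
    · rw [integral_condExpL2_eq hm F hs hμs.ne]
      exact setIntegral_congr_ae (hm s hs) ((hf.coeFn_toLp).mono fun x hx _ => hx)
    · exact lpMeas.aestronglyMeasurable _
  have hmem : MemLp ((condExpL2 ℝ ℝ hm F : lpMeas ℝ ℝ 𝒢 2 μ) : Ω → ℝ) 2 μ := by
    show MemLp (((condExpL2 ℝ ℝ hm F : lpMeas ℝ ℝ 𝒢 2 μ) : Lp ℝ 2 μ) : Ω → ℝ) 2 μ
    exact Lp.memLp _
  exact hmem.ae_eq heq

private lemma integral_pullout [IsProbabilityMeasure μ] (hm : 𝒢 ≤ m0)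
    {f w : Ω → ℝ} (hf : Integrable f μ) (hw : StronglyMeasurable[𝒢] w)
    (hfw : Integrable (fun ω => w ω * f ω) μ) :
    ∫ ω, w ω * f ω ∂μ = ∫ ω, w ω * (μ[f|𝒢]) ω ∂μ := by
  have h1 : μ[w * f|𝒢] =ᵐ[μ] w * μ[f|𝒢] := condExp_mul_of_stronglyMeasurable_left hw hfw hf
  have h2 : ∫ ω, (μ[w * f|𝒢]) ω ∂μ = ∫ ω, (w * f) ω ∂μ := integral_condExp hm
  calc ∫ ω, w ω * f ω ∂μ = ∫ ω, (μ[w * f|𝒢]) ω ∂μ := h2.symm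
    _ = ∫ ω, w ω * (μ[f|𝒢]) ω ∂μ := integral_congr_ae h1

private lemma coord_lhs [IsProbabilityMeasure μ] (hm : 𝒢 ≤ m0)
    (a lam : ℝ) (hlam : 0 < lam)
    {ξ g M v : Ω → ℝ} (hξ : Measurable ξ) (hξ2 : Integrable (fun ω => ξ ω ^ 2) μ)
    (hg : StronglyMeasurable[𝒢] g) (hM : StronglyMeasurable[𝒢] M)
    (hv : StronglyMeasurable[𝒢] v) (hvpos : ∀ ω, 0 < v ω)
    (hterm : Integrable (fun ω =>
        Real.log (v ω ^ 2) + ((a * ξ ω + g ω - M ω) ^ 2 + lam ^ 2) / v ω ^ 2) μ)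
    (hVlog : Integrable (fun ω =>
        Real.log (lam ^ 2 + a ^ 2 * (μ[fun ω' => (ξ ω' - (μ[ξ|𝒢]) ω') ^ 2|𝒢]) ω)) μ) :
    (∫ ω, Real.log (lam ^ 2 + a ^ 2 * (μ[fun ω' => (ξ ω' - (μ[ξ|𝒢]) ω') ^ 2|𝒢]) ω) ∂μ) + 1
      ≤ ∫ ω, (Real.log (v ω ^ 2) + ((a * ξ ω + g ω - M ω) ^ 2 + lam ^ 2) / v ω ^ 2) ∂μ := by
  have hl2 : (0:ℝ) < lam ^ 2 := by positivity
  -- basic measurable objects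
  have hξmem : MemLp ξ 2 μ := (memLp_two_iff_integrable_sq hξ.aestronglyMeasurable).mpr hξ2
  have hξint : Integrable ξ μ := hξmem.integrable one_le_two
  set E' : Ω → ℝ := μ[ξ|𝒢] with hE'
  have hE'mem : MemLp E' 2 μ := condexp_memL2 hm hξmem
  have hE'sm : StronglyMeasurable[𝒢] E' := stronglyMeasurable_condExp
  have hE'int : Integrable E' μ := integrable_condExp
  set R : Ω → ℝ := fun ω => ξ ω - E' ω with hRdef
  have hRmem : MemLp R 2 μ := hξmem.sub hE'mem
  have hRint : Integrable R μ := hRmem.integrable one_le_two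
  have hR2 : Integrable (fun ω => R ω ^ 2) μ :=
    (memLp_two_iff_integrable_sq hRmem.aestronglyMeasurable).mp hRmem
  set V : Ω → ℝ := μ[fun ω' => R ω' ^ 2|𝒢] with hV
  have hVsm : StronglyMeasurable[𝒢] V := stronglyMeasurable_condExp
  have hVint : Integrable V μ := integrable_condExp
  have hVnn : 0 ≤ᵐ[μ] V := condExp_nonneg (ae_of_all _ fun ω => sq_nonneg _)
  -- measurability in the ambient space
  have hvm : Measurable v := hv.measurable.mono hm le_rfl
  have hgm : Measurable g := hg.measurable.mono hm le_rfl
  have hMm : Measurable M := hM.measurable.mono hm le_rfl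
  have hE'm : Measurable E' := hE'sm.measurable.mono hm le_rfl
  have hVm : Measurable V := hVsm.measurable.mono hm le_rfl
  have hRm : Measurable R := hξ.sub hE'm
  -- the truncated weight
  set w : Ω → ℝ := fun ω => min (v ω ^ 2)⁻¹ (lam ^ 2)⁻¹ with hw
  have hwpos : ∀ ω, 0 < w ω := fun ω =>
    lt_min (inv_pos.mpr (pow_pos (hvpos ω) 2)) (inv_pos.mpr hl2)
  have hwle : ∀ ω, w ω ≤ (lam ^ 2)⁻¹ := fun ω => min_le_right _ _
  have hwsm : StronglyMeasurable[𝒢] w :=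
    (((hv.measurable.pow_const 2).inv).min measurable_const).stronglyMeasurable
  have hwm : Measurable w := hwsm.measurable.mono hm le_rfl
  -- abbreviations
  set q : Ω → ℝ := fun ω => (a * ξ ω + g ω - M ω) ^ 2 with hq
  have hqnn : ∀ ω, 0 ≤ q ω := fun ω => sq_nonneg _
  have hqm : Measurable q := (((hξ.const_mul a).add hgm).sub hMm).pow_const 2
  set term : Ω → ℝ := fun ω => Real.log (v ω ^ 2) + (q ω + lam ^ 2) / v ω ^ 2 with hterm_def
  have htermint : Integrable term μ := hterm
  show (∫ ω, Real.log (lam ^ 2 + a ^ 2 * V ω) ∂μ) + 1 ≤ ∫ ω, term ω ∂μ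
  have hVlog' : Integrable (fun ω => Real.log (lam ^ 2 + a ^ 2 * V ω)) μ := hVlog
  have hterm_eq : ∀ ω, term ω = -Real.log ((v ω ^ 2)⁻¹) + (q ω + lam ^ 2) * (v ω ^ 2)⁻¹ := by
    intro ω
    simp only [hterm_def, Real.log_inv, div_eq_mul_inv, neg_neg]
  set φ : Ω → ℝ := fun ω => -Real.log (w ω) + (q ω + lam ^ 2) * w ω with hφ
  have hφm : Measurable φ :=
    ((Real.measurable_log.comp hwm).neg).add ((hqm.add_const _).mul hwm)
  have hub : ∀ ω, φ ω ≤ term ω := fun ω => by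
    rw [hterm_eq ω]
    exact trunc_le lam ((v ω ^ 2)⁻¹) (q ω) hlam (inv_pos.mpr (pow_pos (hvpos ω) 2)) (hqnn ω)
  have hlb : ∀ ω, Real.log (lam ^ 2) + 1 ≤ φ ω := fun ω => by
    have h := log_add_one_le (lam ^ 2) (w ω) hl2 (hwpos ω)
    have h2 : 0 ≤ q ω * w ω := mul_nonneg (hqnn ω) (hwpos ω).le
    simp only [hφ]; nlinarith
  have hφint : Integrable φ μ := by
    refine (htermint.abs.add (integrable_const (|Real.log (lam ^ 2) + 1|))).mono'
      hφm.aestronglyMeasurable (ae_of_all _ fun ω => ?_)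
    have h1 := hub ω
    have h2 := hlb ω
    rw [Real.norm_eq_abs, abs_le]
    constructor
    · simp only [Pi.add_apply]
      linarith [neg_abs_le (Real.log (lam ^ 2) + 1), abs_nonneg (term ω)]
    · simp only [Pi.add_apply]
      linarith [le_abs_self (term ω), abs_nonneg (Real.log (lam ^ 2) + 1)]
  have hintphi : ∫ ω, φ ω ∂μ ≤ ∫ ω, term ω ∂μ := integral_mono hφint htermint hub
  have hlogwm : Measurable (fun ω => Real.log (w ω)) := Real.measurable_log.comp hwm
  have hlogwint : Integrable (fun ω => Real.log (w ω)) μ := by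
    refine (hφint.abs.add (integrable_const (|Real.log (lam ^ 2)|))).mono'
      hlogwm.aestronglyMeasurable (ae_of_all _ fun ω => ?_)
    have h1 : Real.log (w ω) ≤ Real.log ((lam ^ 2)⁻¹) :=
      Real.log_le_log (hwpos ω) (hwle ω)
    rw [Real.log_inv] at h1
    have h2 : -Real.log (w ω) ≤ φ ω := by
      have h3 : 0 ≤ (q ω + lam ^ 2) * w ω :=
        mul_nonneg (add_nonneg (hqnn ω) hl2.le) (hwpos ω).le
      simp only [hφ]; linarith
    rw [Real.norm_eq_abs, abs_le]
    constructor
    · simp only [Pi.add_apply]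
      linarith [le_abs_self (φ ω), abs_nonneg (Real.log (lam ^ 2))]
    · simp only [Pi.add_apply]
      linarith [neg_abs_le (Real.log (lam ^ 2)), neg_abs_le (φ ω), abs_nonneg (φ ω)]
  have hwint : Integrable w μ := by
    refine (integrable_const ((lam ^ 2)⁻¹)).mono' hwm.aestronglyMeasurable
      (ae_of_all _ fun ω => ?_)
    rw [Real.norm_eq_abs, abs_of_pos (hwpos ω)]
    exact hwle ω
  have hqwint : Integrable (fun ω => q ω * w ω) μ := by
    have heqn : ∀ ω, q ω * w ω = φ ω + Real.log (w ω) - lam ^ 2 * w ω := by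
      intro ω; simp only [hφ]; ring
    exact ((hφint.add hlogwint).sub (hwint.const_mul (lam ^ 2))).congr
      (ae_of_all _ fun ω => by
        simp only [Pi.sub_apply, Pi.add_apply]
        exact (heqn ω).symm)
  set D : Ω → ℝ := fun ω => a * E' ω + g ω - M ω with hD
  have hDm : Measurable D := ((hE'm.const_mul a).add hgm).sub hMm
  have hDsm : StronglyMeasurable[𝒢] D :=
    (((hE'sm.measurable.const_mul a).add hg.measurable).sub hM.measurable).stronglyMeasurable
  have hqdec : ∀ ω, q ω = (a * R ω + D ω) ^ 2 := by
    intro ω; simp only [hq, hRdef, hD]; ring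
  have hR2wint : Integrable (fun ω => R ω ^ 2 * w ω) μ := by
    refine (hR2.const_mul ((lam ^ 2)⁻¹)).mono'
      ((hRm.pow_const 2).mul hwm).aestronglyMeasurable (ae_of_all _ fun ω => ?_)
    rw [Real.norm_eq_abs, abs_of_nonneg (mul_nonneg (sq_nonneg _) (hwpos ω).le)]
    calc R ω ^ 2 * w ω ≤ R ω ^ 2 * (lam ^ 2)⁻¹ :=
          mul_le_mul_of_nonneg_left (hwle ω) (sq_nonneg _)
      _ = (lam ^ 2)⁻¹ * R ω ^ 2 := mul_comm _ _
  have hD2wint : Integrable (fun ω => D ω ^ 2 * w ω) μ := by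
    refine ((hqwint.const_mul 2).add (hR2wint.const_mul (2 * a ^ 2))).mono'
      ((hDm.pow_const 2).mul hwm).aestronglyMeasurable (ae_of_all _ fun ω => ?_)
    rw [Real.norm_eq_abs, abs_of_nonneg (mul_nonneg (sq_nonneg _) (hwpos ω).le)]
    have h1 : D ω ^ 2 ≤ 2 * q ω + 2 * a ^ 2 * R ω ^ 2 := by
      have h2 := hqdec ω
      nlinarith [sq_nonneg (2 * (a * R ω) + D ω)]
    calc D ω ^ 2 * w ω ≤ (2 * q ω + 2 * a ^ 2 * R ω ^ 2) * w ω :=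
          mul_le_mul_of_nonneg_right h1 (hwpos ω).le
      _ = 2 * (q ω * w ω) + 2 * a ^ 2 * (R ω ^ 2 * w ω) := by ring
  have hcrossint : Integrable (fun ω => (a * D ω * w ω) * R ω) μ := by
    refine (((hR2wint.const_mul (a ^ 2)).add hD2wint).const_mul 2⁻¹).mono'
      (((hDm.const_mul a).mul hwm).mul hRm).aestronglyMeasurable (ae_of_all _ fun ω => ?_)
    have h1 : |a * R ω * D ω| ≤ ((a * R ω) ^ 2 + D ω ^ 2) / 2 := abs_mul_le_half _ _
    rw [show (a * R ω) ^ 2 = a ^ 2 * R ω ^ 2 by ring] at h1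
    have h2 : |(a * D ω * w ω) * R ω| = |a * R ω * D ω| * w ω := by
      rw [show (a * D ω * w ω) * R ω = (a * R ω * D ω) * w ω by ring,
        abs_mul, abs_of_pos (hwpos ω)]
    rw [Real.norm_eq_abs, h2]
    calc |a * R ω * D ω| * w ω ≤ ((a ^ 2 * R ω ^ 2 + D ω ^ 2) / 2) * w ω :=
          mul_le_mul_of_nonneg_right h1 (hwpos ω).le
      _ = 2⁻¹ * (a ^ 2 * (R ω ^ 2 * w ω) + D ω ^ 2 * w ω) := by ring
  have hcross0 : ∫ ω, (a * D ω * w ω) * R ω ∂μ = 0 := by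
    have hadw_sm : StronglyMeasurable[𝒢] (fun ω => a * D ω * w ω) :=
      ((hDsm.measurable.const_mul a).mul hwsm.measurable).stronglyMeasurable
    have hpull := integral_pullout hm hRint hadw_sm hcrossint
    rw [hpull]
    have hcondR : (μ[R|𝒢]) =ᵐ[μ] 0 := by
      have h1 : μ[R|𝒢] =ᵐ[μ] μ[ξ|𝒢] - μ[E'|𝒢] := condExp_sub hξint hE'int 𝒢
      have h2 : μ[E'|𝒢] =ᵐ[μ] E' := condExp_condExp_of_le le_rfl hm
      filter_upwards [h1, h2] with ω hω1 hω2
      simp only [Pi.sub_apply] at hω1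
      simp only [Pi.zero_apply, hω1, hω2]; simp only [hE', sub_self]
    calc ∫ ω, (a * D ω * w ω) * (μ[R|𝒢]) ω ∂μ = ∫ _ω, (0 : ℝ) ∂μ := by
          refine integral_congr_ae ?_
          filter_upwards [hcondR] with ω hω
          simp only [Pi.zero_apply] at hω
          rw [hω, mul_zero]
      _ = 0 := integral_zero _ _
  have hwR2int : Integrable (fun ω => w ω * R ω ^ 2) μ :=
    hR2wint.congr (ae_of_all _ fun ω => mul_comm _ _)
  have hR2w_eq : ∫ ω, w ω * R ω ^ 2 ∂μ = ∫ ω, w ω * V ω ∂μ :=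
    integral_pullout hm hR2 hwsm hwR2int
  have hVwint : Integrable (fun ω => w ω * V ω) μ := by
    refine (hVint.abs.const_mul ((lam ^ 2)⁻¹)).mono'
      (hwm.mul hVm).aestronglyMeasurable (ae_of_all _ fun ω => ?_)
    rw [Real.norm_eq_abs, abs_mul, abs_of_pos (hwpos ω)]
    exact mul_le_mul_of_nonneg_right (hwle ω) (abs_nonneg _)
  have hqw_ge : a ^ 2 * (∫ ω, w ω * V ω ∂μ) ≤ ∫ ω, q ω * w ω ∂μ := by
    have hAB : Integrable (fun ω => a ^ 2 * (R ω ^ 2 * w ω) + 2 * ((a * D ω * w ω) * R ω)) μ :=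
      (hR2wint.const_mul (a ^ 2)).add (hcrossint.const_mul 2)
    have hmono : ∫ ω, (a ^ 2 * (R ω ^ 2 * w ω) + 2 * ((a * D ω * w ω) * R ω)) ∂μ
        ≤ ∫ ω, q ω * w ω ∂μ := by
      refine integral_mono hAB hqwint fun ω => ?_
      have hexp : q ω * w ω
          = a ^ 2 * (R ω ^ 2 * w ω) + 2 * ((a * D ω * w ω) * R ω) + D ω ^ 2 * w ω := by
        rw [hqdec ω]; ring
      have hnn : 0 ≤ D ω ^ 2 * w ω := mul_nonneg (sq_nonneg _) (hwpos ω).le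
      linarith
    have hsplit2 : ∫ ω, (a ^ 2 * (R ω ^ 2 * w ω) + 2 * ((a * D ω * w ω) * R ω)) ∂μ
        = a ^ 2 * (∫ ω, R ω ^ 2 * w ω ∂μ) + 2 * (∫ ω, (a * D ω * w ω) * R ω ∂μ) := by
      rw [integral_add (hR2wint.const_mul (a ^ 2)) (hcrossint.const_mul 2),
        integral_const_mul, integral_const_mul]
    have e2 : ∫ ω, R ω ^ 2 * w ω ∂μ = ∫ ω, w ω * V ω ∂μ := by
      rw [← hR2w_eq]
      exact integral_congr_ae (ae_of_all _ fun ω => mul_comm _ _)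
    rw [hsplit2, e2, hcross0] at hmono
    linarith
  have hnlwint : Integrable (fun ω => -Real.log (w ω) + lam ^ 2 * w ω) μ :=
    hlogwint.neg.add (hwint.const_mul _)
  have hφsplit : ∫ ω, φ ω ∂μ
      = (∫ ω, (-Real.log (w ω) + lam ^ 2 * w ω) ∂μ) + ∫ ω, q ω * w ω ∂μ := by
    rw [← integral_add hnlwint hqwint]
    exact integral_congr_ae (ae_of_all _ fun ω => by
      simp only [hφ, Pi.add_apply]; ring)
  set ψ : Ω → ℝ := fun ω => -Real.log (w ω) + (lam ^ 2 + a ^ 2 * V ω) * w ω with hψ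
  have hψint : Integrable ψ μ := by
    refine (hnlwint.add (hVwint.const_mul (a ^ 2))).congr (ae_of_all _ fun ω => ?_)
    simp only [hψ, Pi.add_apply]; ring
  have hψsplit : ∫ ω, ψ ω ∂μ
      = (∫ ω, (-Real.log (w ω) + lam ^ 2 * w ω) ∂μ) + a ^ 2 * ∫ ω, w ω * V ω ∂μ := by
    have e3 : ∫ ω, ψ ω ∂μ
        = ∫ ω, ((-Real.log (w ω) + lam ^ 2 * w ω) + a ^ 2 * (w ω * V ω)) ∂μ :=
      integral_congr_ae (ae_of_all _ fun ω => by simp only [hψ]; ring)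
    rw [e3, integral_add hnlwint (hVwint.const_mul (a ^ 2)), integral_const_mul]
  have hψφ : ∫ ω, ψ ω ∂μ ≤ ∫ ω, φ ω ∂μ := by
    rw [hψsplit, hφsplit]; linarith
  have hfinal : (fun ω => Real.log (lam ^ 2 + a ^ 2 * V ω) + 1) ≤ᵐ[μ] ψ := by
    filter_upwards [hVnn] with ω hVω
    have hs : 0 < lam ^ 2 + a ^ 2 * V ω :=
      add_pos_of_pos_of_nonneg hl2 (mul_nonneg (sq_nonneg a) hVω)
    exact log_add_one_le _ _ hs (hwpos ω)
  have hlast : ∫ ω, (Real.log (lam ^ 2 + a ^ 2 * V ω) + 1) ∂μ ≤ ∫ ω, ψ ω ∂μ :=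
    integral_mono_ae (hVlog'.add (integrable_const 1)) hψint hfinal
  have hsum : ∫ ω, (Real.log (lam ^ 2 + a ^ 2 * V ω) + 1) ∂μ
      = (∫ ω, Real.log (lam ^ 2 + a ^ 2 * V ω) ∂μ) + 1 := by
    rw [integral_add hVlog' (integrable_const 1), integral_const]
    simp
  linarith

private lemma coord_rhs [IsProbabilityMeasure μ] (hm : 𝒢 ≤ m0)
    (a lam : ℝ) (hlam : 0 < lam)
    {ξ : Ω → ℝ} (hξ : Measurable ξ) (hξ2 : Integrable (fun ω => ξ ω ^ 2) μ)
    (hVlog : Integrable (fun ω =>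
        Real.log (lam ^ 2 + a ^ 2 * (μ[fun ω' => (ξ ω' - (μ[ξ|𝒢]) ω') ^ 2|𝒢]) ω)) μ) :
    Integrable (fun ω =>
        Real.log (lam ^ 2 + a ^ 2 * (μ[fun ω' => (ξ ω' - (μ[ξ|𝒢]) ω') ^ 2|𝒢]) ω)
        + ((a * (ξ ω - (μ[ξ|𝒢]) ω)) ^ 2 + lam ^ 2)
          * (lam ^ 2 + a ^ 2 * max ((μ[fun ω' => (ξ ω' - (μ[ξ|𝒢]) ω') ^ 2|𝒢]) ω) 0)⁻¹) μ
    ∧ ∫ ω, (Real.log (lam ^ 2 + a ^ 2 * (μ[fun ω' => (ξ ω' - (μ[ξ|𝒢]) ω') ^ 2|𝒢]) ω)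
        + ((a * (ξ ω - (μ[ξ|𝒢]) ω)) ^ 2 + lam ^ 2)
          * (lam ^ 2 + a ^ 2 * max ((μ[fun ω' => (ξ ω' - (μ[ξ|𝒢]) ω') ^ 2|𝒢]) ω) 0)⁻¹) ∂μ
      = (∫ ω, Real.log (lam ^ 2 + a ^ 2 * (μ[fun ω' => (ξ ω' - (μ[ξ|𝒢]) ω') ^ 2|𝒢]) ω) ∂μ)
        + 1 := by
  have hl2 : (0:ℝ) < lam ^ 2 := by positivity
  have hξmem : MemLp ξ 2 μ := (memLp_two_iff_integrable_sq hξ.aestronglyMeasurable).mpr hξ2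
  set E' : Ω → ℝ := μ[ξ|𝒢] with hE'
  have hE'mem : MemLp E' 2 μ := condexp_memL2 hm hξmem
  have hE'sm : StronglyMeasurable[𝒢] E' := stronglyMeasurable_condExp
  have hE'm : Measurable E' := hE'sm.measurable.mono hm le_rfl
  set R : Ω → ℝ := fun ω => ξ ω - E' ω with hRdef
  have hRmem : MemLp R 2 μ := hξmem.sub hE'mem
  have hRm : Measurable R := hξ.sub hE'm
  have hR2 : Integrable (fun ω => R ω ^ 2) μ :=
    (memLp_two_iff_integrable_sq hRmem.aestronglyMeasurable).mp hRmem
  set V : Ω → ℝ := μ[fun ω' => R ω' ^ 2|𝒢] with hV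
  have hVsm : StronglyMeasurable[𝒢] V := stronglyMeasurable_condExp
  have hVint : Integrable V μ := integrable_condExp
  have hVm : Measurable V := hVsm.measurable.mono hm le_rfl
  have hVnn : 0 ≤ᵐ[μ] V := condExp_nonneg (ae_of_all _ fun ω => sq_nonneg _)
  show Integrable (fun ω => Real.log (lam ^ 2 + a ^ 2 * V ω)
        + ((a * R ω) ^ 2 + lam ^ 2) * (lam ^ 2 + a ^ 2 * max (V ω) 0)⁻¹) μ
    ∧ ∫ ω, (Real.log (lam ^ 2 + a ^ 2 * V ω)
        + ((a * R ω) ^ 2 + lam ^ 2) * (lam ^ 2 + a ^ 2 * max (V ω) 0)⁻¹) ∂μ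
      = (∫ ω, Real.log (lam ^ 2 + a ^ 2 * V ω) ∂μ) + 1
  have hVlog' : Integrable (fun ω => Real.log (lam ^ 2 + a ^ 2 * V ω)) μ := hVlog
  set u : Ω → ℝ := fun ω => (lam ^ 2 + a ^ 2 * max (V ω) 0)⁻¹ with hu
  have hdenpos : ∀ ω, 0 < lam ^ 2 + a ^ 2 * max (V ω) 0 := fun ω =>
    add_pos_of_pos_of_nonneg hl2 (mul_nonneg (sq_nonneg a) (le_max_right _ _))
  have hupos : ∀ ω, 0 < u ω := fun ω => inv_pos.mpr (hdenpos ω)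
  have hule : ∀ ω, u ω ≤ (lam ^ 2)⁻¹ := fun ω => by
    apply inv_anti₀ hl2
    exact le_add_of_nonneg_right (mul_nonneg (sq_nonneg a) (le_max_right _ _))
  have husm : StronglyMeasurable[𝒢] u :=
    ((((hVsm.measurable.max measurable_const).const_mul (a ^ 2)).const_add
      (lam ^ 2)).inv).stronglyMeasurable
  have hum : Measurable u := husm.measurable.mono hm le_rfl
  have huint : Integrable u μ := by
    refine (integrable_const ((lam ^ 2)⁻¹)).mono' hum.aestronglyMeasurable
      (ae_of_all _ fun ω => ?_)
    rw [Real.norm_eq_abs, abs_of_pos (hupos ω)]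
    exact hule ω
  have huR2int : Integrable (fun ω => u ω * R ω ^ 2) μ := by
    refine (hR2.const_mul ((lam ^ 2)⁻¹)).mono'
      (hum.mul (hRm.pow_const 2)).aestronglyMeasurable (ae_of_all _ fun ω => ?_)
    rw [Real.norm_eq_abs, abs_of_nonneg (mul_nonneg (hupos ω).le (sq_nonneg _))]
    exact mul_le_mul_of_nonneg_right (hule ω) (sq_nonneg _)
  have huVint : Integrable (fun ω => u ω * V ω) μ := by
    refine (hVint.abs.const_mul ((lam ^ 2)⁻¹)).mono'
      (hum.mul hVm).aestronglyMeasurable (ae_of_all _ fun ω => ?_)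
    rw [Real.norm_eq_abs, abs_mul, abs_of_pos (hupos ω)]
    exact mul_le_mul_of_nonneg_right (hule ω) (abs_nonneg _)
  have hInt2 : Integrable (fun ω => ((a * R ω) ^ 2 + lam ^ 2) * u ω) μ := by
    have hb : Integrable (fun ω => ((lam ^ 2)⁻¹) * ((a * R ω) ^ 2 + lam ^ 2)) μ := by
      refine Integrable.const_mul ?_ _
      refine ((hR2.const_mul (a ^ 2)).add (integrable_const (lam ^ 2))).congr
        (ae_of_all _ fun ω => ?_)
      simp only [Pi.add_apply]; ring
    refine hb.mono' (((hRm.const_mul a).pow_const 2).add_const _ |>.mul hum).aestronglyMeasurable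
      (ae_of_all _ fun ω => ?_)
    have hnn : 0 ≤ (a * R ω) ^ 2 + lam ^ 2 := add_nonneg (sq_nonneg _) hl2.le
    rw [Real.norm_eq_abs, abs_of_nonneg (mul_nonneg hnn (hupos ω).le)]
    calc ((a * R ω) ^ 2 + lam ^ 2) * u ω ≤ ((a * R ω) ^ 2 + lam ^ 2) * (lam ^ 2)⁻¹ :=
          mul_le_mul_of_nonneg_left (hule ω) hnn
      _ = (lam ^ 2)⁻¹ * ((a * R ω) ^ 2 + lam ^ 2) := mul_comm _ _
  constructor
  · exact hVlog'.add hInt2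
  · rw [integral_add hVlog' hInt2]
    congr 1
    -- ∫ ((aR)²+λ²)u = 1
    have e1 : ∫ ω, ((a * R ω) ^ 2 + lam ^ 2) * u ω ∂μ
        = a ^ 2 * (∫ ω, u ω * R ω ^ 2 ∂μ) + lam ^ 2 * ∫ ω, u ω ∂μ := by
      have e0 : ∫ ω, ((a * R ω) ^ 2 + lam ^ 2) * u ω ∂μ
          = ∫ ω, (a ^ 2 * (u ω * R ω ^ 2) + lam ^ 2 * u ω) ∂μ :=
        integral_congr_ae (ae_of_all _ fun ω => by ring)
      rw [e0, integral_add (huR2int.const_mul (a ^ 2)) (huint.const_mul (lam ^ 2)),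
        integral_const_mul, integral_const_mul]
    have e2 : ∫ ω, u ω * R ω ^ 2 ∂μ = ∫ ω, u ω * V ω ∂μ :=
      integral_pullout hm hR2 husm huR2int
    have e3 : ∫ ω, (a ^ 2 * (u ω * V ω) + lam ^ 2 * u ω) ∂μ = 1 := by
      have hae : (fun ω => a ^ 2 * (u ω * V ω) + lam ^ 2 * u ω) =ᵐ[μ] fun _ => (1:ℝ) := by
        filter_upwards [hVnn] with ω hVω
        have hmax : max (V ω) 0 = V ω := max_eq_left hVω
        have hne : lam ^ 2 + a ^ 2 * max (V ω) 0 ≠ 0 := (hdenpos ω).ne'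
        calc a ^ 2 * (u ω * V ω) + lam ^ 2 * u ω
            = (lam ^ 2 + a ^ 2 * max (V ω) 0) * u ω := by rw [hmax]; ring
          _ = 1 := by rw [hu]; exact mul_inv_cancel₀ hne
      rw [integral_congr_ae hae]
      simp
    have e4 : ∫ ω, (a ^ 2 * (u ω * V ω) + lam ^ 2 * u ω) ∂μ
        = a ^ 2 * (∫ ω, u ω * V ω ∂μ) + lam ^ 2 * ∫ ω, u ω ∂μ := by
      rw [integral_add (huVint.const_mul (a ^ 2)) (huint.const_mul (lam ^ 2)),
        integral_const_mul, integral_const_mul]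
    rw [e1, e2, ← e4, e3]

end

/-- **Fixed-point solutions of DDPM.** For `μ̃(x, x₀) = a • x₀ + b • x`, the per-timestep
objective `L(m, v) = E[Σᵢ (log vᵢ(X)² + ((μ̃(X, X₀)ᵢ − mᵢ(X))² + λ²)/vᵢ(X)²)]` is minimized
by `m*ᵢ(X) = a E[X₀ᵢ|X] + b Xᵢ` and `v*ᵢ(X)² = λ² + a² Var[X₀ᵢ|X]`. -/
theorem ddpm_fixed_point {d : ℕ} {Ω : Type*} [MeasurableSpace Ω]
    (μ : Measure Ω) [IsProbabilityMeasure μ]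
    (X₀ X : Ω → (Fin d → ℝ)) (hX₀ : Measurable X₀) (hX : Measurable X)
    (hsq : ∀ i, Integrable (fun ω => (X₀ ω i) ^ 2) μ)
    (a b lam : ℝ) (hlam : 0 < lam)
    (postE postV : (Fin d → ℝ) → (Fin d → ℝ))
    (hpostE : ∀ i, (fun ω => postE (X ω) i) =ᵐ[μ]
      μ[fun ω => X₀ ω i | MeasurableSpace.comap X inferInstance])
    (hpostV : ∀ i, (fun ω => postV (X ω) i) =ᵐ[μ]
      μ[fun ω => (X₀ ω i - postE (X ω) i) ^ 2 | MeasurableSpace.comap X inferInstance])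
    (mstar vstar : (Fin d → ℝ) → (Fin d → ℝ))
    (hmstar : ∀ x i, mstar x i = a * postE x i + b * x i)
    (hvstar : ∀ x i, (vstar x i) ^ 2 = lam ^ 2 + a ^ 2 * postV x i)
    (hvstar_log : ∀ i, Integrable (fun ω => |Real.log ((vstar (X ω) i) ^ 2)|) μ)
    (m v : (Fin d → ℝ) → (Fin d → ℝ)) (hm_meas : Measurable m) (hv_meas : Measurable v)
    (hv_pos : ∀ x i, 0 < v x i)
    (hint : Integrable (fun ω => ∑ i, (Real.log ((v (X ω) i) ^ 2) +
      (((a * X₀ ω i + b * X ω i) - m (X ω) i) ^ 2 + lam ^ 2) / (v (X ω) i) ^ 2)) μ) :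
    (∫ ω, ∑ i, (Real.log ((v (X ω) i) ^ 2) +
        (((a * X₀ ω i + b * X ω i) - m (X ω) i) ^ 2 + lam ^ 2) / (v (X ω) i) ^ 2) ∂μ)
      ≥ ∫ ω, ∑ i, (Real.log ((vstar (X ω) i) ^ 2) +
        (((a * X₀ ω i + b * X ω i) - mstar (X ω) i) ^ 2 + lam ^ 2) / (vstar (X ω) i) ^ 2) ∂μ := by
  have hm : MeasurableSpace.comap X inferInstance ≤ ‹MeasurableSpace Ω› := hX.comap_le
  have hXg : Measurable[MeasurableSpace.comap X inferInstance] X :=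
    Measurable.of_comap_le le_rfl
  have hl2 : (0:ℝ) < lam ^ 2 := by positivity
  -- per-coordinate pieces
  have hξm : ∀ i : Fin d, Measurable (fun ω => X₀ ω i) :=
    fun i => (measurable_pi_apply i).comp hX₀
  have hgsm : ∀ i : Fin d, StronglyMeasurable[MeasurableSpace.comap X inferInstance]
      (fun ω => b * X ω i) :=
    fun i => (((measurable_pi_apply i).comp hXg).const_mul b).stronglyMeasurable
  have hMsm : ∀ i : Fin d, StronglyMeasurable[MeasurableSpace.comap X inferInstance]
      (fun ω => m (X ω) i) :=
    fun i => ((measurable_pi_apply i).comp (hm_meas.comp hXg)).stronglyMeasurable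
  have hvsm : ∀ i : Fin d, StronglyMeasurable[MeasurableSpace.comap X inferInstance]
      (fun ω => v (X ω) i) :=
    fun i => ((measurable_pi_apply i).comp (hv_meas.comp hXg)).stronglyMeasurable
  have hvm : ∀ i : Fin d, Measurable (fun ω => v (X ω) i) :=
    fun i => (hvsm i).measurable.mono hm le_rfl
  have hMm : ∀ i : Fin d, Measurable (fun ω => m (X ω) i) :=
    fun i => (hMsm i).measurable.mono hm le_rfl
  have hXim : ∀ i : Fin d, Measurable (fun ω => X ω i) :=
    fun i => (measurable_pi_apply i).comp hX
  -- each coordinate of the objective is integrable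
  have htermm : ∀ i : Fin d, Measurable (fun ω => Real.log ((v (X ω) i) ^ 2) +
      (((a * X₀ ω i + b * X ω i) - m (X ω) i) ^ 2 + lam ^ 2) / (v (X ω) i) ^ 2) := by
    intro i
    refine (Real.measurable_log.comp ((hvm i).pow_const 2)).add (Measurable.div ?_ ?_)
    · exact ((((hξm i).const_mul a).add ((hXim i).const_mul b)).sub (hMm i)).pow_const 2
        |>.add_const _
    · exact (hvm i).pow_const 2
  have htermlb : ∀ (i : Fin d) (ω : Ω), Real.log (lam ^ 2) + 1
      ≤ Real.log ((v (X ω) i) ^ 2) +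
        (((a * X₀ ω i + b * X ω i) - m (X ω) i) ^ 2 + lam ^ 2) / (v (X ω) i) ^ 2 := by
    intro i ω
    have hvp : (0:ℝ) < (v (X ω) i) ^ 2 := pow_pos (hv_pos (X ω) i) 2
    have h := log_add_one_le (lam ^ 2) ((v (X ω) i) ^ 2)⁻¹ hl2 (inv_pos.mpr hvp)
    rw [Real.log_inv] at h
    have hqnn : 0 ≤ ((a * X₀ ω i + b * X ω i) - m (X ω) i) ^ 2 * ((v (X ω) i) ^ 2)⁻¹ :=
      mul_nonneg (sq_nonneg _) (inv_pos.mpr hvp).le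
    have e : (((a * X₀ ω i + b * X ω i) - m (X ω) i) ^ 2 + lam ^ 2) / (v (X ω) i) ^ 2
        = ((a * X₀ ω i + b * X ω i) - m (X ω) i) ^ 2 * ((v (X ω) i) ^ 2)⁻¹
          + lam ^ 2 * ((v (X ω) i) ^ 2)⁻¹ := by
      rw [div_eq_mul_inv]; ring
    rw [e]
    linarith
  have htermint : ∀ i : Fin d, Integrable (fun ω => Real.log ((v (X ω) i) ^ 2) +
      (((a * X₀ ω i + b * X ω i) - m (X ω) i) ^ 2 + lam ^ 2) / (v (X ω) i) ^ 2) μ := by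
    intro i
    set c₀ : ℝ := Real.log (lam ^ 2) + 1 with hc₀
    refine (hint.abs.add (integrable_const (((d:ℝ) + 1) * |c₀|))).mono'
      (htermm i).aestronglyMeasurable (ae_of_all _ fun ω => ?_)
    set S : ℝ := ∑ j, (Real.log ((v (X ω) j) ^ 2) +
      (((a * X₀ ω j + b * X ω j) - m (X ω) j) ^ 2 + lam ^ 2) / (v (X ω) j) ^ 2) with hS
    set T : ℝ := Real.log ((v (X ω) i) ^ 2) +
      (((a * X₀ ω i + b * X ω i) - m (X ω) i) ^ 2 + lam ^ 2) / (v (X ω) i) ^ 2 with hT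
    have h1 : T - c₀ ≤ ∑ j, ((Real.log ((v (X ω) j) ^ 2) +
        (((a * X₀ ω j + b * X ω j) - m (X ω) j) ^ 2 + lam ^ 2) / (v (X ω) j) ^ 2) - c₀) :=
      Finset.single_le_sum (f := fun j => (Real.log ((v (X ω) j) ^ 2) +
        (((a * X₀ ω j + b * X ω j) - m (X ω) j) ^ 2 + lam ^ 2) / (v (X ω) j) ^ 2) - c₀)
        (fun j _ => sub_nonneg.mpr (htermlb j ω)) (Finset.mem_univ i)
    have h2 : ∑ j, ((Real.log ((v (X ω) j) ^ 2) +
        (((a * X₀ ω j + b * X ω j) - m (X ω) j) ^ 2 + lam ^ 2) / (v (X ω) j) ^ 2) - c₀)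
        = S - (d:ℝ) * c₀ := by
      rw [Finset.sum_sub_distrib, Finset.sum_const, Finset.card_univ, Fintype.card_fin,
        nsmul_eq_mul]
    have hd0 : (0:ℝ) ≤ (d:ℝ) := Nat.cast_nonneg d
    have hmul : -((d:ℝ) * c₀) ≤ (d:ℝ) * |c₀| := by
      rw [neg_mul_eq_mul_neg]
      exact mul_le_mul_of_nonneg_left (neg_le_abs c₀) hd0
    have hlow := htermlb i ω
    rw [← hT] at hlow
    clear_value S T c₀
    rw [Real.norm_eq_abs, abs_le]
    constructor
    · simp only [Pi.add_apply]
      rw [← hS]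
      have : -|c₀| ≤ c₀ := neg_abs_le c₀
      have h3 : (0:ℝ) ≤ |S| := abs_nonneg S
      have h4 : (0:ℝ) ≤ (d:ℝ) * |c₀| := mul_nonneg hd0 (abs_nonneg _)
      nlinarith [abs_nonneg c₀]
    · simp only [Pi.add_apply]
      rw [← hS]
      have h5 : S ≤ |S| := le_abs_self S
      have h6 : c₀ ≤ |c₀| := le_abs_self c₀
      rw [h2] at h1
      nlinarith [abs_nonneg c₀]
  -- conditional variance, per coordinate
  have hVnn : ∀ i : Fin d, (0:Ω → ℝ) ≤ᵐ[μ]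
      μ[fun ω' => (X₀ ω' i - (μ[fun ω => X₀ ω i| MeasurableSpace.comap X inferInstance]) ω') ^ 2
        | MeasurableSpace.comap X inferInstance] :=
    fun i => condExp_nonneg (ae_of_all _ fun ω => sq_nonneg _)
  have hWV : ∀ i : Fin d, (fun ω => postV (X ω) i) =ᵐ[μ]
      μ[fun ω' => (X₀ ω' i - (μ[fun ω => X₀ ω i| MeasurableSpace.comap X inferInstance]) ω') ^ 2
        | MeasurableSpace.comap X inferInstance] := by
    intro i
    refine (hpostV i).trans (condExp_congr_ae ?_)
    filter_upwards [hpostE i] with ω hω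
    rw [hω]
  have hVlog : ∀ i : Fin d, Integrable (fun ω => Real.log (lam ^ 2 + a ^ 2 *
      (μ[fun ω' => (X₀ ω' i - (μ[fun ω => X₀ ω i| MeasurableSpace.comap X inferInstance]) ω') ^ 2
        | MeasurableSpace.comap X inferInstance]) ω)) μ := by
    intro i
    have hVm : Measurable (fun ω =>
        (μ[fun ω' => (X₀ ω' i - (μ[fun ω => X₀ ω i| MeasurableSpace.comap X inferInstance]) ω') ^ 2
          | MeasurableSpace.comap X inferInstance]) ω) :=
      stronglyMeasurable_condExp.measurable.mono hm le_rfl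
    have hmeas : Measurable (fun ω => Real.log (lam ^ 2 + a ^ 2 *
        (μ[fun ω' => (X₀ ω' i - (μ[fun ω => X₀ ω i| MeasurableSpace.comap X inferInstance]) ω') ^ 2
          | MeasurableSpace.comap X inferInstance]) ω)) :=
      Real.measurable_log.comp ((hVm.const_mul (a ^ 2)).const_add (lam ^ 2))
    have hae : (fun ω => |Real.log ((vstar (X ω) i) ^ 2)|) =ᵐ[μ]
        (fun ω => |Real.log (lam ^ 2 + a ^ 2 *
          (μ[fun ω' => (X₀ ω' i -
            (μ[fun ω => X₀ ω i| MeasurableSpace.comap X inferInstance]) ω') ^ 2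
            | MeasurableSpace.comap X inferInstance]) ω)|) := by
      filter_upwards [hWV i] with ω hω
      rw [hvstar (X ω) i, hω]
    have habs := (hvstar_log i).congr hae
    exact (integrable_norm_iff hmeas.aestronglyMeasurable).mp
      (habs.congr (ae_of_all _ fun ω => (Real.norm_eq_abs _).symm))
  -- lower bound for each coordinate of the objective
  have hmain : ∀ i : Fin d, (∫ ω, Real.log (lam ^ 2 + a ^ 2 *
      (μ[fun ω' => (X₀ ω' i - (μ[fun ω => X₀ ω i| MeasurableSpace.comap X inferInstance]) ω') ^ 2
        | MeasurableSpace.comap X inferInstance]) ω) ∂μ) + 1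
      ≤ ∫ ω, (Real.log ((v (X ω) i) ^ 2) +
        (((a * X₀ ω i + b * X ω i) - m (X ω) i) ^ 2 + lam ^ 2) / (v (X ω) i) ^ 2) ∂μ :=
    fun i => coord_lhs hm a lam hlam (hξm i) (hsq i) (hgsm i) (hMsm i) (hvsm i)
      (fun ω => hv_pos (X ω) i) (htermint i) (hVlog i)
  -- the value at the candidate optimum
  have hrhs := fun i : Fin d => coord_rhs hm a lam hlam (hξm i) (hsq i) (hVlog i)
  -- the star integrand coincides a.e. with the "nice" integrand of coord_rhs
  have hstar_ae : ∀ i : Fin d, (fun ω => Real.log ((vstar (X ω) i) ^ 2) +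
      (((a * X₀ ω i + b * X ω i) - mstar (X ω) i) ^ 2 + lam ^ 2) / (vstar (X ω) i) ^ 2) =ᵐ[μ]
      (fun ω => Real.log (lam ^ 2 + a ^ 2 *
        (μ[fun ω' => (X₀ ω' i - (μ[fun ω => X₀ ω i| MeasurableSpace.comap X inferInstance]) ω') ^ 2
          | MeasurableSpace.comap X inferInstance]) ω)
        + ((a * (X₀ ω i - (μ[fun ω => X₀ ω i| MeasurableSpace.comap X inferInstance]) ω)) ^ 2
            + lam ^ 2)
          * (lam ^ 2 + a ^ 2 * max
            ((μ[fun ω' => (X₀ ω' i -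
              (μ[fun ω => X₀ ω i| MeasurableSpace.comap X inferInstance]) ω') ^ 2
              | MeasurableSpace.comap X inferInstance]) ω) 0)⁻¹) := by
    intro i
    filter_upwards [hpostE i, hWV i, hVnn i] with ω hpe hwv hv0
    simp only [Pi.zero_apply] at hv0
    have hnum : (a * X₀ ω i + b * X ω i) - mstar (X ω) i
        = a * (X₀ ω i - (μ[fun ω => X₀ ω i| MeasurableSpace.comap X inferInstance]) ω) := by
      rw [hmstar (X ω) i, ← hpe]; ring
    have hden : (vstar (X ω) i) ^ 2 = lam ^ 2 + a ^ 2 * max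
        ((μ[fun ω' => (X₀ ω' i -
          (μ[fun ω => X₀ ω i| MeasurableSpace.comap X inferInstance]) ω') ^ 2
          | MeasurableSpace.comap X inferInstance]) ω) 0 := by
      rw [hvstar (X ω) i, hwv, max_eq_left hv0]
    rw [hnum, hden, div_eq_mul_inv]
    congr 1
    rw [max_eq_left hv0]
  have hstar_int : ∀ i : Fin d, Integrable (fun ω => Real.log ((vstar (X ω) i) ^ 2) +
      (((a * X₀ ω i + b * X ω i) - mstar (X ω) i) ^ 2 + lam ^ 2) / (vstar (X ω) i) ^ 2) μ :=
    fun i => (hrhs i).1.congr (hstar_ae i).symm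
  have hstar_val : ∀ i : Fin d, ∫ ω, (Real.log ((vstar (X ω) i) ^ 2) +
      (((a * X₀ ω i + b * X ω i) - mstar (X ω) i) ^ 2 + lam ^ 2) / (vstar (X ω) i) ^ 2) ∂μ
      = (∫ ω, Real.log (lam ^ 2 + a ^ 2 *
        (μ[fun ω' => (X₀ ω' i - (μ[fun ω => X₀ ω i| MeasurableSpace.comap X inferInstance]) ω') ^ 2
          | MeasurableSpace.comap X inferInstance]) ω) ∂μ) + 1 :=
    fun i => (integral_congr_ae (hstar_ae i)).trans (hrhs i).2
  -- put everything together
  have hsum1 : ∫ ω, ∑ i, (Real.log ((v (X ω) i) ^ 2) +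
      (((a * X₀ ω i + b * X ω i) - m (X ω) i) ^ 2 + lam ^ 2) / (v (X ω) i) ^ 2) ∂μ
      = ∑ i, ∫ ω, (Real.log ((v (X ω) i) ^ 2) +
        (((a * X₀ ω i + b * X ω i) - m (X ω) i) ^ 2 + lam ^ 2) / (v (X ω) i) ^ 2) ∂μ :=
    integral_finset_sum Finset.univ fun i _ => htermint i
  have hsum2 : ∫ ω, ∑ i, (Real.log ((vstar (X ω) i) ^ 2) +
      (((a * X₀ ω i + b * X ω i) - mstar (X ω) i) ^ 2 + lam ^ 2) / (vstar (X ω) i) ^ 2) ∂μ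
      = ∑ i, ∫ ω, (Real.log ((vstar (X ω) i) ^ 2) +
        (((a * X₀ ω i + b * X ω i) - mstar (X ω) i) ^ 2 + lam ^ 2) / (vstar (X ω) i) ^ 2) ∂μ :=
    integral_finset_sum Finset.univ fun i _ => hstar_int i
  rw [ge_iff_le, hsum1, hsum2]
  refine Finset.sum_le_sum fun i _ => ?_
  rw [hstar_val i]
  exact hmain i
end

section
/- Let s ≥ 1, m ≥ 1 and d = s·m. Let F_d and F_m be the d-point and m-point DFT matrices (F_d[j,k] = exp(−2πi·j·k/d), F_m[j,k] = exp(−2πi·j·k/m)), let P be the m×d matrix with P[n, j] = 1 if j = n·s and 0 otherwise (s-fold standard downsampling), let k̂ ∈ ℂ^d, and set A = P · F_d⁻¹ · diag(k̂) · F_d. Then for any σ > 0 and r ∈ ℝ the matrix σ² I_m + r² A Aᴴ is invertible, and for every u ∈ ℂ^m the vector v = Aᴴ (σ² I_m + r² A Aᴴ)⁻¹ u satisfies, for every l ∈ {0,…,d−1} written as l = n + j·m with n ∈ {0,…,m−1} and j ∈ {0,…,s−1}: (F_d v)[l] = conj(k̂[l]) · (F_m u)[n] / ( σ² + (r²/s)·Σ_{i=0}^{s−1}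 |k̂[n + i·m]|² ). (Closed-form guidance for super resolution: v = F⁻¹( conj(k̂) ⊙_s F_{↓s}(u) / (σ² + r²·(k̂ ⊙ conj(k̂))_{⇓s}) ).) -/
/-!
Write `G = F_m`. The columns of `F_d` at the indices `n·s` are the columns of `G`, periodically
extended: `(F_d Pᴴ)[p, n] = G[p mod m, n]`. Together with `F_d F_dᴴ = d I` this gives
`F_d Aᴴ = diag(conj k̂) F_d Pᴴ` and `A Aᴴ = Gᴴ diag(S) G / d` with
`S n = Σ_{p ≡ n (mod m)} |k̂ p|²`.
Since `G Gᴴ = m I`, `G` diagonalises `σ² I + r² A Aᴴ` with the positive eigenvalues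
`σ² + (r²/s) S n`, so the matrix is inverted eigenvalue by eigenvalue and `F_d v` is read off
coordinatewise.
-/

open Matrix Complex Finset

section MatrixAlgebra

variable {R ι κ ν μ : Type*}

theorem mul_conjTranspose_eq_submatrix [Semiring R] [StarRing R] [Fintype κ] [DecidableEq κ]
    {P : Matrix ι κ R} {e : ι → κ} (hP : ∀ i j, P i j = if j = e i then 1 else 0)
    (X : Matrix ν κ R) :
    X * Pᴴ = X.submatrix id e := by
  ext a i
  simp [mul_apply, hP, apply_ite star]

theorem submatrix_mul_diagonal_mul_submatrix [Semiring R] [Fintype ι] [Fintype κ] [DecidableEq ι]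
    [DecidableEq κ] (Y : Matrix ν ι R) (Z : Matrix ι μ R) (π : κ → ι) (w : κ → R) :
    Y.submatrix id π * diagonal w * Z.submatrix π id
      = Y * diagonal (fun q => ∑ p, if π p = q then w p else 0) * Z := by
  ext a b
  simp only [mul_apply, submatrix_apply, id, diagonal_apply, mul_ite, mul_zero, ite_mul, zero_mul,
    Finset.sum_ite_eq', Finset.mem_univ, if_true, Finset.mul_sum, Finset.sum_mul]
  rw [Finset.sum_comm]
  simp [mul_assoc]

theorem submatrix_mul_mul_cancel [Semiring R] [Fintype ι] [DecidableEq ι] {G V : Matrix ι ι R}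
    (hGV : G * V = 1) (π : κ → ι) (X : Matrix ι μ R) :
    G.submatrix π id * (V * X) = X.submatrix π id := by
  rw [← Matrix.mul_assoc, ← submatrix_id_id V,
    ← submatrix_mul _ _ _ _ _ Function.bijective_id, hGV]
  ext a b
  simp [mul_apply, one_apply]

theorem diagonal_mul_submatrix_mul_mulVec_apply [Semiring R] [Fintype ι] [Fintype κ]
    [DecidableEq ι] [DecidableEq κ] {G V : Matrix ι ι R} (hGV : G * V = 1) (π : κ → ι)
    (x : κ → R) (y : ι → R) (u : ι → R) (i : κ) :
    ((diagonal x * G.submatrix π id * (V * diagonal y * G)) *ᵥ u) i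
      = x i * (y (π i) * (G *ᵥ u) (π i)) := by
  simp only [Matrix.mul_assoc]
  rw [submatrix_mul_mul_cancel hGV, ← mulVec_mulVec, mulVec_diagonal]
  change x i * ((diagonal y * G) *ᵥ u) (π i) = _
  rw [← mulVec_mulVec, mulVec_diagonal]

theorem smul_one_add_smul_mul_diagonal_mul [CommSemiring R] [Fintype ι] [DecidableEq ι]
    {V G : Matrix ι ι R} (hVG : V * G = 1) (a b : R) (S : ι → R) :
    a • 1 + b • (V * diagonal S * G) = V * diagonal (fun i => a + b * S i) * G := by
  have hdiag : diagonal (fun i => a + b * S i) = a • 1 + b • diagonal S := by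
    ext i j
    by_cases h : i = j <;> simp [one_apply, h]
  rw [hdiag, Matrix.mul_add, Matrix.add_mul, Matrix.mul_smul, Matrix.smul_mul, Matrix.mul_one, hVG,
    Matrix.mul_smul, Matrix.smul_mul]

theorem mul_diagonal_mul_mul_diagonal_inv_mul [Field R] [Fintype ι] [DecidableEq ι]
    {V G : Matrix ι ι R} (hGV : G * V = 1) {c : ι → R} (hc : ∀ i, c i ≠ 0) :
    (V * diagonal c * G) * (V * diagonal c⁻¹ * G) = 1 := by
  have hcc : (fun i => c i * c⁻¹ i) = fun _ => 1 := funext fun i => mul_inv_cancel₀ (hc i)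
  simp only [Matrix.mul_assoc]
  rw [← Matrix.mul_assoc G, hGV, Matrix.one_mul, ← Matrix.mul_assoc (diagonal c),
    diagonal_mul_diagonal, hcc, diagonal_one, Matrix.one_mul, mul_eq_one_comm.mp hGV]

variable [Field R] [StarRing R] [Fintype κ] [DecidableEq κ] {N : ℕ} {F : Matrix κ κ R}

theorem mul_smul_conjTranspose_eq_one (hN : (N : R) ≠ 0) (hF : F * Fᴴ = (N : R) • 1) :
    F * ((N : R)⁻¹ • Fᴴ) = 1 := by
  rw [Matrix.mul_smul, hF, smul_smul, inv_mul_cancel₀ hN, one_smul]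

theorem inv_eq_smul_conjTranspose (hN : (N : R) ≠ 0) (hF : F * Fᴴ = (N : R) • 1) :
    F⁻¹ = (N : R)⁻¹ • Fᴴ :=
  inv_eq_right_inv (mul_smul_conjTranspose_eq_one hN hF)

theorem mul_conjTranspose_conj_diagonal (hN : (N : R) ≠ 0) (hF : F * Fᴴ = (N : R) • 1)
    (X : Matrix ι κ R) (k : κ → R) :
    F * (X * F⁻¹ * diagonal k * F)ᴴ = diagonal (star k) * (F * Xᴴ) := by
  simp only [conjTranspose_mul, diagonal_conjTranspose, inv_eq_smul_conjTranspose hN hF,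
    conjTranspose_smul, conjTranspose_conjTranspose, star_inv₀, star_natCast, Matrix.mul_assoc]
  rw [← Matrix.mul_assoc F, hF, Matrix.smul_mul, Matrix.one_mul, Matrix.smul_mul, Matrix.mul_smul,
    smul_smul, mul_inv_cancel₀ hN, one_smul]

theorem conj_diagonal_mul_conjTranspose [Fintype ι] (hN : (N : R) ≠ 0)
    (hF : F * Fᴴ = (N : R) • 1) (X : Matrix ι κ R) (k : κ → R) :
    (X * F⁻¹ * diagonal k * F) * (X * F⁻¹ * diagonal k * F)ᴴ
      = (N : R)⁻¹ • ((F * Xᴴ)ᴴ * diagonal (fun p => k p * star (k p)) * (F * Xᴴ)) := by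
  rw [Matrix.mul_assoc, mul_conjTranspose_conj_diagonal hN hF, inv_eq_smul_conjTranspose hN hF,
    ← diagonal_mul_diagonal]
  simp only [conjTranspose_mul, conjTranspose_conjTranspose, Matrix.smul_mul, Matrix.mul_smul,
    Matrix.mul_assoc]
  rfl

end MatrixAlgebra

theorem geom_sum_eq_zero_of_pow_eq_one {R : Type*} [Ring R] [NoZeroDivisors R] {x : R} {n : ℕ}
    (hx : x ≠ 1) (hxn : x ^ n = 1) : ∑ i ∈ range n, x ^ i = 0 := by
  have h := geom_sum_mul x n
  rw [hxn, sub_self] at h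
  exact (mul_eq_zero.mp h).resolve_right (sub_ne_zero.mpr hx)

section DFT

noncomputable def dft (N : ℕ) : Matrix (Fin N) (Fin N) ℂ :=
  of fun j k => cexp (-(2 * Real.pi * I) * (j : ℕ) * (k : ℕ) / N)

noncomputable def dftRoot (N : ℕ) : ℂ :=
  cexp (-(2 * Real.pi * I) / N)

theorem dft_apply_eq_pow (N : ℕ) (j k : Fin N) : dft N j k = dftRoot N ^ ((j : ℕ) * k) := by
  rw [dft, dftRoot, of_apply, ← exp_nat_mul]
  push_cast
  ring_nf

theorem isPrimitiveRoot_dftRoot {N : ℕ} (hN : N ≠ 0) : IsPrimitiveRoot (dftRoot N) N := by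
  simpa [dftRoot, neg_div, exp_neg] using (isPrimitiveRoot_exp N hN).inv

theorem dftRoot_mul_pow {s m : ℕ} (hs : s ≠ 0) : dftRoot (s * m) ^ s = dftRoot m := by
  rw [dftRoot, dftRoot, ← exp_nat_mul]
  congr 1
  push_cast
  field_simp

theorem dft_mul_conjTranspose_dft (N : ℕ) : dft N * (dft N)ᴴ = (N : ℂ) • 1 := by
  rcases eq_or_ne N 0 with rfl | hN
  · exact Subsingleton.elim _ _
  set ξ := dftRoot N
  have hξ := isPrimitiveRoot_dftRoot hN
  have hstar : star ξ = ξ⁻¹ := (inv_eq_conj (norm_eq_one_of_pow_eq_one hξ.pow_eq_one hN)).symm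
  ext a b
  -- entry `(a, b)` is the geometric sum of `x = ξ^(a - b)`, an `N`-th root of unity
  set x := ξ ^ (a : ℕ) * ξ⁻¹ ^ (b : ℕ) with hx_def
  have hterm (k : Fin N) : dft N a k * star (dft N b k) = x ^ (k : ℕ) := by
    rw [dft_apply_eq_pow, dft_apply_eq_pow, star_pow, hstar, mul_pow, ← pow_mul, ← pow_mul,
      mul_comm (b : ℕ)]
  have hx : x = 1 ↔ a = b := by
    rw [hx_def, inv_pow, mul_inv_eq_one₀ (pow_ne_zero _ (hξ.ne_zero hN)), Fin.ext_iff]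
    exact ⟨fun h => hξ.pow_inj a.isLt b.isLt h, fun h => h ▸ rfl⟩
  have hxN : x ^ N = 1 := by
    rw [mul_pow, ← pow_mul, ← pow_mul, mul_comm _ N, mul_comm _ N, pow_mul, pow_mul,
      hξ.pow_eq_one, inv_pow, hξ.pow_eq_one]
    simp
  simp only [mul_apply, conjTranspose_apply, hterm, Fin.sum_univ_eq_sum_range (x ^ ·),
    Matrix.smul_apply, one_apply, smul_eq_mul]
  by_cases hab : a = b
  · simp [hab, hx.2 hab]
  · simp [hab, geom_sum_eq_zero_of_pow_eq_one (mt hx.1 hab) hxN]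

theorem dft_apply_mul {s m : ℕ} (p : Fin (s * m)) (n : Fin m) (hn : (n : ℕ) * s < s * m) :
    dft (s * m) p ⟨n * s, hn⟩ = dft m p.modNat n := by
  have hs : s ≠ 0 := by rintro rfl; simp at hn
  have hm := (isPrimitiveRoot_dftRoot n.pos.ne').pow_eq_one
  rw [dft_apply_eq_pow, dft_apply_eq_pow, Fin.coe_modNat, Fin.val_mk,
    show (p : ℕ) * (n * s) = s * (p * n) by ring, pow_mul, dftRoot_mul_pow hs,
    pow_eq_pow_mod _ hm, pow_eq_pow_mod ((p % m) * n) hm, Nat.mod_mul_mod]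

theorem dft_mul_conjTranspose_downsample {s m : ℕ} (hs : 0 < s)
    {P : Matrix (Fin m) (Fin (s * m)) ℂ}
    (hP : ∀ n j, P n j = if (j : ℕ) = n * s then 1 else 0) :
    dft (s * m) * Pᴴ = (dft m).submatrix Fin.modNat id := by
  have he (n : Fin m) : (n : ℕ) * s < s * m := by
    rw [mul_comm s]
    exact Nat.mul_lt_mul_of_pos_right n.isLt hs
  rw [mul_conjTranspose_eq_submatrix (e := fun n => ⟨n * s, he n⟩)
    fun n j => by simp [hP, Fin.ext_iff]]
  ext p n
  exact dft_apply_mul p n (he n)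

end DFT

section Downsampling

variable {s m : ℕ}

-- `aliasSum x = s · (x)_{⇓s}` in the paper's notation
def aliasSum (x : Fin (s * m) → ℂ) (n : Fin m) : ℂ :=
  ∑ p, if p.modNat = n then x p else 0

theorem aliasSum_mul_star_self (k : Fin (s * m) → ℂ) (n : Fin m) :
    aliasSum (fun p => k p * star (k p)) n
      = ∑ p : Fin (s * m), if (p : ℕ) % m = n then ((‖k p‖ ^ 2 : ℝ) : ℂ) else 0 := by
  simp only [aliasSum, Fin.ext_iff, Fin.coe_modNat, star_def, mul_conj', ofReal_pow]

variable {P : Matrix (Fin m) (Fin (s * m)) ℂ}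

-- Without `(m := s)` the product on the right elaborates with the `CStarMatrix` multiplication.
theorem dft_mul_conjTranspose_downsample_conv (hs : 0 < s) (hm : 0 < m)
    (hP : ∀ n j, P n j = if (j : ℕ) = n * s then 1 else 0) (k : Fin (s * m) → ℂ) :
    dft (s * m) * (P * (dft (s * m))⁻¹ * diagonal k * dft (s * m))ᴴ
      = diagonal (star k) * (dft m).submatrix (Fin.modNat (m := s)) id := by
  rw [mul_conjTranspose_conj_diagonal (Nat.cast_ne_zero.mpr (Nat.mul_pos hs hm).ne')
    (dft_mul_conjTranspose_dft _), dft_mul_conjTranspose_downsample hs hP]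

theorem downsample_conv_mul_conjTranspose (hs : 0 < s) (hm : 0 < m)
    (hP : ∀ n j, P n j = if (j : ℕ) = n * s then 1 else 0) (k : Fin (s * m) → ℂ) :
    (P * (dft (s * m))⁻¹ * diagonal k * dft (s * m))
        * (P * (dft (s * m))⁻¹ * diagonal k * dft (s * m))ᴴ
      = (s : ℂ)⁻¹ • (((m : ℂ)⁻¹ • (dft m)ᴴ)
          * diagonal (aliasSum fun p => k p * star (k p)) * dft m) := by
  rw [conj_diagonal_mul_conjTranspose (Nat.cast_ne_zero.mpr (Nat.mul_pos hs hm).ne')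
    (dft_mul_conjTranspose_dft _), dft_mul_conjTranspose_downsample hs hP, conjTranspose_submatrix,
    submatrix_mul_diagonal_mul_submatrix, Matrix.smul_mul, Matrix.smul_mul, smul_smul,
    Nat.cast_mul, mul_inv]
  rfl

end Downsampling

/-- **Closed-form guidance for super resolution.** For `A = D_{↓s} F_d⁻¹ diag(k̂) F_d`
(circular convolution followed by `s`-fold downsampling, `d = s·m`), the matrix
`σ² I + r² A Aᴴ` is invertible, and the guidance vector
`v = Aᴴ (σ² I + r² A Aᴴ)⁻¹ u` satisfies, for each frequency `l = n + j·m`,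
`(F_d v)[l] = conj(k̂[l]) (F_m u)[n] / (σ² + (r²/s) Σ_{i<s} |k̂[n + i·m]|²)`,
where the sum over the alias class of `n` is written as a sum over all `p` with
`p ≡ n (mod m)`. -/
theorem super_resolution_guidance {s m d : ℕ} (hs : 0 < s) (hm : 0 < m) (hd : d = s * m)
    (Fd : Matrix (Fin d) (Fin d) ℂ)
    (hFd : ∀ j k, Fd j k =
      Complex.exp (-(2 * (Real.pi : ℂ) * Complex.I) * ((j : ℕ) : ℂ) * ((k : ℕ) : ℂ) / (d : ℂ)))
    (Fm : Matrix (Fin m) (Fin m) ℂ)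
    (hFm : ∀ j k, Fm j k =
      Complex.exp (-(2 * (Real.pi : ℂ) * Complex.I) * ((j : ℕ) : ℂ) * ((k : ℕ) : ℂ) / (m : ℂ)))
    (P : Matrix (Fin m) (Fin d) ℂ)
    (hP : ∀ n j, P n j = if (j : ℕ) = (n : ℕ) * s then 1 else 0)
    (khat : Fin d → ℂ)
    (A : Matrix (Fin m) (Fin d) ℂ) (hA : A = P * Fd⁻¹ * Matrix.diagonal khat * Fd)
    (σ r : ℝ) (hσ : 0 < σ) :
    IsUnit ((σ ^ 2 : ℂ) • (1 : Matrix (Fin m) (Fin m) ℂ) + (r ^ 2 : ℂ) • (A * Aᴴ)) ∧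
    ∀ (u : Fin m → ℂ) (v : Fin d → ℂ),
      v = Aᴴ.mulVec ((((σ ^ 2 : ℂ) • (1 : Matrix (Fin m) (Fin m) ℂ)
            + (r ^ 2 : ℂ) • (A * Aᴴ))⁻¹).mulVec u) →
      ∀ (l : Fin d) (n : Fin m) (j : Fin s), (l : ℕ) = (n : ℕ) + (j : ℕ) * m →
        Fd.mulVec v l
          = star (khat l) * Fm.mulVec u n /
            ((σ ^ 2 : ℂ) + ((r ^ 2 / s : ℝ) : ℂ) *
              ∑ p : Fin d, if (p : ℕ) % m = (n : ℕ) then ((‖khat p‖ ^ 2 : ℝ) : ℂ) else 0) := by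
  subst hd
  obtain rfl : Fd = dft (s * m) := ext hFd
  obtain rfl : Fm = dft m := ext hFm
  set V : Matrix (Fin m) (Fin m) ℂ := (m : ℂ)⁻¹ • (dft m)ᴴ
  have hGV : dft m * V = 1 :=
    mul_smul_conjTranspose_eq_one (Nat.cast_ne_zero.mpr hm.ne') (dft_mul_conjTranspose_dft m)
  set c : Fin m → ℂ := fun n => (σ ^ 2 : ℂ) + ((r ^ 2 / s : ℝ) : ℂ) *
    ∑ p : Fin (s * m), if (p : ℕ) % m = (n : ℕ) then ((‖khat p‖ ^ 2 : ℝ) : ℂ) else 0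
  have hc (n : Fin m) : c n ≠ 0 := by
    have h := ofReal_ne_zero.mpr (show (0 : ℝ) < σ ^ 2 + r ^ 2 / s *
      ∑ p : Fin (s * m), if (p : ℕ) % m = n then ‖khat p‖ ^ 2 else 0 by positivity).ne'
    push_cast [c, apply_ite ofReal] at h ⊢
    exact h
  have hM : (σ ^ 2 : ℂ) • (1 : Matrix (Fin m) (Fin m) ℂ) + (r ^ 2 : ℂ) • (A * Aᴴ)
      = V * diagonal c * dft m := by
    rw [hA, downsample_conv_mul_conjTranspose hs hm hP, smul_smul,
      smul_one_add_smul_mul_diagonal_mul (mul_eq_one_comm.mp hGV)]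
    simp only [c, aliasSum_mul_star_self]
    push_cast
    ring_nf
  have hMinv := mul_diagonal_mul_mul_diagonal_inv_mul hGV hc
  refine ⟨hM ▸ IsUnit.of_mul_eq_one _ hMinv, ?_⟩
  rintro u v rfl l n j hl
  have hln : l.modNat = n := Fin.ext (by simp [hl, Nat.mod_eq_of_lt n.isLt])
  rw [hM, inv_eq_right_inv hMinv, mulVec_mulVec, mulVec_mulVec, hA,
    dft_mul_conjTranspose_downsample_conv hs hm hP, diagonal_mul_submatrix_mul_mulVec_apply hGV,
    hln, Pi.inv_apply, Pi.star_apply, div_eq_mul_inv]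
  ring
end

section
/- Let μ be a probability measure on ℝ^d and σ > 0. Define p(x) = ∫ exp(−‖x − x₀‖²/(2σ²)) dμ(x₀) and m(x) = (∫ x₀ · exp(−‖x − x₀‖²/(2σ²)) dμ(x₀)) / p(x). Then m is differentiable on ℝ^d and, for every x, σ² times the Jacobian matrix of m at x equals the posterior covariance matrix C(x) = (∫ (x₀ − m(x))·(x₀ − m(x))ᵀ · exp(−‖x − x₀‖²/(2σ²)) dμ(x₀)) / p(x); in particular the Jacobian of m is symmetric and positive semidefinite. (Second-order Tweedie's formula: σ_t² ∇_{x_t} E[x₀|x_t] = Cov[x₀|x_t], used to identify the moment-matched optimal posterior covariance Σ*_t(x_t).) -/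
open MeasureTheory
open scoped RealInnerProductSpace

set_option synthInstance.maxHeartbeats 1000000
set_option maxHeartbeats 2000000

namespace Tweedie

variable {d : ℕ} {σ : ℝ}

local notation "E" => EuclideanSpace ℝ (Fin d)

noncomputable def G (σ : ℝ) (x a : EuclideanSpace ℝ (Fin d)) : ℝ :=
  Real.exp (-‖x - a‖ ^ 2 / (2 * σ ^ 2))

lemma G_pos (x a : E) : 0 < G σ x a := Real.exp_pos _

lemma G_le_one (x a : E) : G σ x a ≤ 1 := by
  rw [G]
  apply Real.exp_le_one_iff.2
  have : (0:ℝ) ≤ ‖x - a‖ ^ 2 / (2 * σ ^ 2) := by positivity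
  rw [neg_div]; linarith

lemma exp_aux {t : ℝ} (ht : 0 ≤ t) : Real.exp (-t) ≤ (t + 1)⁻¹ := by
  rw [Real.exp_neg]
  exact inv_anti₀ (by linarith) (by linarith [Real.add_one_le_exp t])

lemma key1 (hσ : 0 < σ) {r : ℝ} (hr : 0 ≤ r) : r * Real.exp (-r ^ 2 / (2 * σ ^ 2)) ≤ σ := by
  have ha : (0:ℝ) ≤ r ^ 2 / (2 * σ ^ 2) := by positivity
  have hE := exp_aux ha
  rw [neg_div] at *
  have hpos : (0:ℝ) < r ^ 2 / (2 * σ ^ 2) + 1 := by positivity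
  have h1 : r * Real.exp (-(r ^ 2 / (2 * σ ^ 2))) ≤ r * (r ^ 2 / (2 * σ ^ 2) + 1)⁻¹ :=
    mul_le_mul_of_nonneg_left hE hr
  refine h1.trans ?_
  rw [← div_eq_mul_inv, div_le_iff₀ hpos]
  have e : σ * (r ^ 2 / (2 * σ ^ 2) + 1) = σ * (r ^ 2 + 2 * σ ^ 2) / (2 * σ ^ 2) := by
    field_simp
  rw [e, le_div_iff₀ (by positivity)]
  nlinarith [mul_nonneg hσ.le (sq_nonneg (r - σ))]

lemma key2 (hσ : 0 < σ) {r : ℝ} (hr : 0 ≤ r) :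
    r ^ 2 * Real.exp (-r ^ 2 / (2 * σ ^ 2)) ≤ 2 * σ ^ 2 := by
  have ha : (0:ℝ) ≤ r ^ 2 / (2 * σ ^ 2) := by positivity
  have hE := exp_aux ha
  rw [neg_div] at *
  have hpos : (0:ℝ) < r ^ 2 / (2 * σ ^ 2) + 1 := by positivity
  have h1 : r ^ 2 * Real.exp (-(r ^ 2 / (2 * σ ^ 2))) ≤ r ^ 2 * (r ^ 2 / (2 * σ ^ 2) + 1)⁻¹ :=
    mul_le_mul_of_nonneg_left hE (by positivity)
  refine h1.trans ?_
  rw [← div_eq_mul_inv, div_le_iff₀ hpos]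
  have e : 2 * σ ^ 2 * (r ^ 2 / (2 * σ ^ 2) + 1) = r ^ 2 + 2 * σ ^ 2 := by
    field_simp
  rw [e]; nlinarith

lemma keyG1 (hσ : 0 < σ) (x a : E) : G σ x a * ‖x - a‖ ≤ σ := by
  have := key1 hσ (norm_nonneg (x - a))
  rw [G, mul_comm]; exact this

lemma keyG2 (hσ : 0 < σ) (x a : E) : G σ x a * ‖x - a‖ ^ 2 ≤ 2 * σ ^ 2 := by
  have := key2 hσ (norm_nonneg (x - a))
  rw [G, mul_comm]; exact this

lemma contG (x : E) : Continuous fun a : E => G σ x a := by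
  unfold G; fun_prop

lemma contG' (x : E) : Continuous fun a : E => G σ (a) x := by
  unfold G; fun_prop

lemma hasFDerivAt_G (a x : E) :
    HasFDerivAt (fun x : E => G σ x a) ((-(σ ^ 2)⁻¹ * G σ x a) • innerSL ℝ (x - a)) x := by
  have h1 : HasFDerivAt (fun x : E => ‖x - a‖ ^ 2) (2 • innerSL ℝ (x - a)) x := by
    simpa using ((hasFDerivAt_id x).sub_const a).norm_sq
  have h2 : HasFDerivAt (fun x : E => -‖x - a‖ ^ 2 / (2 * σ ^ 2))
      ((-(2 * σ ^ 2)⁻¹) • (2 • innerSL ℝ (x - a))) x := by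
    have he : (fun x : E => -‖x - a‖ ^ 2 / (2 * σ ^ 2))
        = fun x : E => (-(2 * σ ^ 2)⁻¹) * ‖x - a‖ ^ 2 := by
      funext y; ring
    rw [he]
    exact h1.const_mul _
  have h3 := h2.exp
  have heq : (Real.exp (-‖x - a‖ ^ 2 / (2 * σ ^ 2)) • ((-(2 * σ ^ 2)⁻¹) • (2 • innerSL ℝ (x - a))))
      = (-(σ ^ 2)⁻¹ * G σ x a) • innerSL ℝ (x - a) := by
    ext v
    simp [G, ContinuousLinearMap.smul_apply]
    ring
  exact heq ▸ h3


lemma hasFDerivAt_Gsmul (a x : E) :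
    HasFDerivAt (fun x : E => G σ x a • a)
      ((-(σ ^ 2)⁻¹ * G σ x a) • ((innerSL ℝ (x - a)).smulRight a)) x := by
  have h := (hasFDerivAt_G (σ := σ) a x).smul_const a
  have heq : (((-(σ ^ 2)⁻¹ * G σ x a) • innerSL ℝ (x - a)).smulRight a)
      = (-(σ ^ 2)⁻¹ * G σ x a) • ((innerSL ℝ (x - a)).smulRight a) := by
    ext v
    simp [ContinuousLinearMap.smulRight_apply, smul_smul]
  exact heq ▸ h

lemma norm_G'_le (hσ : 0 < σ) (x a : E) :
    ‖(-(σ ^ 2)⁻¹ * G σ x a) • innerSL ℝ (x - a)‖ ≤ σ⁻¹ := by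
  apply ContinuousLinearMap.opNorm_le_bound _ (by positivity)
  intro v
  have hv : |⟪x - a, v⟫| ≤ ‖x - a‖ * ‖v‖ := abs_real_inner_le_norm _ _
  have hG := (G_pos (σ := σ) x a).le
  have h1 := keyG1 hσ x a
  have hstep : G σ x a * |⟪x - a, v⟫| ≤ σ * ‖v‖ := by
    calc G σ x a * |⟪x - a, v⟫| ≤ G σ x a * (‖x - a‖ * ‖v‖) :=
          mul_le_mul_of_nonneg_left hv hG
      _ = (G σ x a * ‖x - a‖) * ‖v‖ := by ring
      _ ≤ σ * ‖v‖ := mul_le_mul_of_nonneg_right h1 (norm_nonneg v)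
  have hval : ‖((-(σ ^ 2)⁻¹ * G σ x a) • innerSL ℝ (x - a)) v‖
      = (σ ^ 2)⁻¹ * (G σ x a * |⟪x - a, v⟫|) := by
    simp only [ContinuousLinearMap.smul_apply, innerSL_apply_apply, smul_eq_mul,
      Real.norm_eq_abs, abs_mul, abs_neg, abs_inv]
    rw [abs_of_nonneg hG, abs_of_nonneg (sq_nonneg σ)]
    ring
  rw [hval]
  calc (σ ^ 2)⁻¹ * (G σ x a * |⟪x - a, v⟫|) ≤ (σ ^ 2)⁻¹ * (σ * ‖v‖) :=
        mul_le_mul_of_nonneg_left hstep (by positivity)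
    _ = σ⁻¹ * ‖v‖ := by
        rw [sq]; field_simp

lemma prod_bound (hσ : 0 < σ) {x x' : E} (a : E) (hx' : x' ∈ Metric.ball x 1) :
    G σ x' a * (‖x' - a‖ * ‖a‖) ≤ 2 * σ ^ 2 + (‖x‖ + 1) * σ := by
  have hG := (G_pos (σ := σ) x' a).le
  have hx'n : ‖x'‖ ≤ ‖x‖ + 1 := by
    have h := Metric.mem_ball.mp hx'
    rw [dist_eq_norm] at h
    have := norm_sub_norm_le x' x
    linarith
  have hna : ‖a‖ ≤ ‖x' - a‖ + (‖x‖ + 1) := by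
    have h1 : ‖a‖ ≤ ‖a - x'‖ + ‖x'‖ := by
      have := norm_sub_norm_le a x'
      linarith [norm_nonneg (a - x'), norm_nonneg x']
    rw [norm_sub_rev] at h1
    linarith
  have hc : (0:ℝ) ≤ ‖x‖ + 1 := by positivity
  have h2 := keyG2 hσ x' a
  have h1 := keyG1 hσ x' a
  calc G σ x' a * (‖x' - a‖ * ‖a‖)
      ≤ G σ x' a * (‖x' - a‖ * (‖x' - a‖ + (‖x‖ + 1))) := by
        apply mul_le_mul_of_nonneg_left _ hG
        exact mul_le_mul_of_nonneg_left hna (norm_nonneg _)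
    _ = G σ x' a * ‖x' - a‖ ^ 2 + (‖x‖ + 1) * (G σ x' a * ‖x' - a‖) := by ring
    _ ≤ 2 * σ ^ 2 + (‖x‖ + 1) * σ := by nlinarith

lemma norm_G''_le (hσ : 0 < σ) {x x' : E} (a : E) (hx' : x' ∈ Metric.ball x 1) :
    ‖(-(σ ^ 2)⁻¹ * G σ x' a) • ((innerSL ℝ (x' - a)).smulRight a)‖
      ≤ (σ ^ 2)⁻¹ * (2 * σ ^ 2 + (‖x‖ + 1) * σ) := by
  apply ContinuousLinearMap.opNorm_le_bound _ (by positivity)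
  intro v
  have hG := (G_pos (σ := σ) x' a).le
  have hv : |⟪x' - a, v⟫| ≤ ‖x' - a‖ * ‖v‖ := abs_real_inner_le_norm _ _
  have hval : ‖((-(σ ^ 2)⁻¹ * G σ x' a) • ((innerSL ℝ (x' - a)).smulRight a)) v‖
      = (σ ^ 2)⁻¹ * (G σ x' a * (|⟪x' - a, v⟫| * ‖a‖)) := by
    simp only [ContinuousLinearMap.smul_apply, ContinuousLinearMap.smulRight_apply,
      innerSL_apply_apply, norm_smul, smul_eq_mul, Real.norm_eq_abs, abs_mul, abs_neg, abs_inv]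
    rw [abs_of_nonneg hG, abs_of_nonneg (sq_nonneg σ)]
    ring
  rw [hval]
  have hstep : G σ x' a * (|⟪x' - a, v⟫| * ‖a‖) ≤ (2 * σ ^ 2 + (‖x‖ + 1) * σ) * ‖v‖ := by
    have hpb := prod_bound hσ a hx'
    calc G σ x' a * (|⟪x' - a, v⟫| * ‖a‖)
        ≤ G σ x' a * ((‖x' - a‖ * ‖v‖) * ‖a‖) := by
          apply mul_le_mul_of_nonneg_left _ hG
          exact mul_le_mul_of_nonneg_right hv (norm_nonneg _)
      _ = (G σ x' a * (‖x' - a‖ * ‖a‖)) * ‖v‖ := by ring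
      _ ≤ (2 * σ ^ 2 + (‖x‖ + 1) * σ) * ‖v‖ :=
          mul_le_mul_of_nonneg_right hpb (norm_nonneg v)
  calc (σ ^ 2)⁻¹ * (G σ x' a * (|⟪x' - a, v⟫| * ‖a‖))
      ≤ (σ ^ 2)⁻¹ * ((2 * σ ^ 2 + (‖x‖ + 1) * σ) * ‖v‖) :=
        mul_le_mul_of_nonneg_left hstep (by positivity)
    _ = (σ ^ 2)⁻¹ * (2 * σ ^ 2 + (‖x‖ + 1) * σ) * ‖v‖ := by ring


variable {μ : Measure (EuclideanSpace ℝ (Fin d))}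

lemma integrable_bdd [IsProbabilityMeasure μ] {F : Type*} [NormedAddCommGroup F]
    {f : EuclideanSpace ℝ (Fin d) → F} (hf : Continuous f) {C : ℝ} (h : ∀ a, ‖f a‖ ≤ C) :
    Integrable f μ :=
  (integrable_const C).mono' hf.aestronglyMeasurable (Filter.Eventually.of_forall h)

lemma contF' (x : E) :
    Continuous fun a : E => (-(σ ^ 2)⁻¹ * G σ x a) • innerSL ℝ (x - a) := by
  apply Continuous.smul (continuous_const.mul (contG x))
  exact (innerSL ℝ).continuous.comp (continuous_const.sub continuous_id)

lemma contF'' (x : E) :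
    Continuous fun a : E => (-(σ ^ 2)⁻¹ * G σ x a) • ((innerSL ℝ (x - a)).smulRight a) := by
  apply Continuous.smul (continuous_const.mul (contG x))
  have h1 : Continuous fun a : E =>
      (ContinuousLinearMap.smulRightL ℝ (EuclideanSpace ℝ (Fin d)) (EuclideanSpace ℝ (Fin d)))
        (innerSL ℝ (x - a)) :=
    (ContinuousLinearMap.smulRightL ℝ _ _).continuous.comp
      ((innerSL ℝ).continuous.comp (continuous_const.sub continuous_id))
  exact h1.clm_apply continuous_id

lemma intF' [IsProbabilityMeasure μ] (hσ : 0 < σ) (x : E) :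
    Integrable (fun a : E => (-(σ ^ 2)⁻¹ * G σ x a) • innerSL ℝ (x - a)) μ :=
  integrable_bdd (contF' x) (fun a => norm_G'_le hσ x a)

lemma intF'' [IsProbabilityMeasure μ] (hσ : 0 < σ) (x : E) :
    Integrable (fun a : E => (-(σ ^ 2)⁻¹ * G σ x a) • ((innerSL ℝ (x - a)).smulRight a)) μ :=
  integrable_bdd (contF'' x) (fun a => norm_G''_le hσ a (Metric.mem_ball_self one_pos))

lemma intG [IsProbabilityMeasure μ] (x : E) : Integrable (fun a : E => G σ x a) μ :=
  integrable_bdd (contG x) (fun a => by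
    rw [Real.norm_eq_abs, abs_of_pos (G_pos x a)]; exact G_le_one x a)

lemma norm_le_add (x a : E) : ‖a‖ ≤ ‖x - a‖ + ‖x‖ := by
  have h := norm_sub_norm_le a x
  rw [norm_sub_rev x a]
  linarith [abs_nonneg (‖a‖ - ‖x‖), le_abs_self (‖a‖ - ‖x‖)]

lemma intGsmul [IsProbabilityMeasure μ] (hσ : 0 < σ) (x : E) :
    Integrable (fun a : E => G σ x a • a) μ := by
  apply integrable_bdd ((contG x).smul continuous_id) (C := σ + ‖x‖)
  intro a
  change ‖G σ x a • id a‖ ≤ _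
  rw [norm_smul, Real.norm_eq_abs, abs_of_pos (G_pos x a)]
  simp only [id_eq]
  have hna := norm_le_add x a
  nlinarith [keyG1 hσ x a, G_le_one (σ := σ) x a, (G_pos (σ := σ) x a).le,
    norm_nonneg x, norm_nonneg (x - a)]

lemma hasFDerivAt_P [IsProbabilityMeasure μ] (hσ : 0 < σ) (x : E) :
    HasFDerivAt (fun x : E => ∫ a, G σ x a ∂μ)
      (∫ a, (-(σ ^ 2)⁻¹ * G σ x a) • innerSL ℝ (x - a) ∂μ) x := by
  apply hasFDerivAt_integral_of_dominated_of_fderiv_le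
      (F' := fun (x' : E) a => (-(σ ^ 2)⁻¹ * G σ x' a) • innerSL ℝ (x' - a))
      (bound := fun _ => σ⁻¹) (Metric.ball_mem_nhds x one_pos)
  · exact Filter.Eventually.of_forall fun y => (contG y).aestronglyMeasurable
  · exact intG x
  · exact (contF' x).aestronglyMeasurable
  · exact Filter.Eventually.of_forall fun a x' _ => norm_G'_le hσ x' a
  · exact integrable_const _
  · exact Filter.Eventually.of_forall fun a x' _ => hasFDerivAt_G a x'

lemma hasFDerivAt_N [IsProbabilityMeasure μ] (hσ : 0 < σ) (x : E) :
    HasFDerivAt (fun x : E => ∫ a, G σ x a • a ∂μ)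
      (∫ a, (-(σ ^ 2)⁻¹ * G σ x a) • ((innerSL ℝ (x - a)).smulRight a) ∂μ) x := by
  apply hasFDerivAt_integral_of_dominated_of_fderiv_le
      (F' := fun (x' : E) a => (-(σ ^ 2)⁻¹ * G σ x' a) • ((innerSL ℝ (x' - a)).smulRight a))
      (bound := fun _ => (σ ^ 2)⁻¹ * (2 * σ ^ 2 + (‖x‖ + 1) * σ)) (Metric.ball_mem_nhds x one_pos)
  · exact Filter.Eventually.of_forall fun y => ((contG y).smul continuous_id).aestronglyMeasurable
  · exact intGsmul hσ x
  · exact (contF'' x).aestronglyMeasurable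
  · exact Filter.Eventually.of_forall fun a x' hx' => norm_G''_le hσ a hx'
  · exact integrable_const _
  · exact Filter.Eventually.of_forall fun a x' _ => hasFDerivAt_Gsmul a x'


lemma cont_inner (w v : E) : Continuous fun a : E => (⟪a - w, v⟫ : ℝ) :=
  (continuous_id.sub continuous_const).inner continuous_const

lemma intk [IsProbabilityMeasure μ] (hσ : 0 < σ) (x v : E) :
    Integrable (fun a : E => G σ x a * ⟪a - x, v⟫) μ := by
  apply integrable_bdd ((contG x).mul (cont_inner x v)) (C := σ * ‖v‖)
  intro a
  simp only [Pi.mul_apply]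
  rw [Real.norm_eq_abs, abs_mul, abs_of_pos (G_pos x a)]
  have hv : |⟪a - x, v⟫| ≤ ‖a - x‖ * ‖v‖ := abs_real_inner_le_norm _ _
  rw [norm_sub_rev] at hv
  have h1 := keyG1 hσ x a
  have hG := (G_pos (σ := σ) x a).le
  calc G σ x a * |⟪a - x, v⟫| ≤ G σ x a * (‖x - a‖ * ‖v‖) := mul_le_mul_of_nonneg_left hv hG
    _ = (G σ x a * ‖x - a‖) * ‖v‖ := by ring
    _ ≤ σ * ‖v‖ := mul_le_mul_of_nonneg_right h1 (norm_nonneg v)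

lemma intK [IsProbabilityMeasure μ] (hσ : 0 < σ) (x v : E) :
    Integrable (fun a : E => (G σ x a * ⟪a - x, v⟫) • a) μ := by
  apply integrable_bdd (((contG x).mul (cont_inner x v)).smul continuous_id)
    (C := (2 * σ ^ 2 + (‖x‖ + 1) * σ) * ‖v‖)
  intro a
  change ‖(G σ x a * ⟪a - x, v⟫) • a‖ ≤ _
  rw [norm_smul, Real.norm_eq_abs, abs_mul, abs_of_pos (G_pos x a)]
  have hv : |⟪a - x, v⟫| ≤ ‖a - x‖ * ‖v‖ := abs_real_inner_le_norm _ _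
  rw [norm_sub_rev] at hv
  have hG := (G_pos (σ := σ) x a).le
  have hpb := prod_bound hσ (x := x) a (Metric.mem_ball_self one_pos)
  calc G σ x a * |⟪a - x, v⟫| * ‖a‖ ≤ G σ x a * (‖x - a‖ * ‖v‖) * ‖a‖ := by
        apply mul_le_mul_of_nonneg_right _ (norm_nonneg a)
        exact mul_le_mul_of_nonneg_left hv hG
    _ = (G σ x a * (‖x - a‖ * ‖a‖)) * ‖v‖ := by ring
    _ ≤ (2 * σ ^ 2 + (‖x‖ + 1) * σ) * ‖v‖ := mul_le_mul_of_nonneg_right hpb (norm_nonneg v)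

lemma intCov [IsProbabilityMeasure μ] (hσ : 0 < σ) (x w v : E) :
    Integrable (fun a : E => (G σ x a * ⟪a - w, v⟫) • (a - w)) μ := by
  apply integrable_bdd (((contG x).mul (cont_inner w v)).smul
    (continuous_id.sub continuous_const))
    (C := (2 * σ ^ 2 + 2 * ‖x - w‖ * σ + ‖x - w‖ ^ 2) * ‖v‖)
  intro a
  change ‖(G σ x a * ⟪a - w, v⟫) • (a - w)‖ ≤ _
  rw [norm_smul, Real.norm_eq_abs, abs_mul, abs_of_pos (G_pos x a)]
  have hv : |⟪a - w, v⟫| ≤ ‖a - w‖ * ‖v‖ := abs_real_inner_le_norm _ _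
  have hG := (G_pos (σ := σ) x a).le
  have hr : ‖a - w‖ ≤ ‖x - a‖ + ‖x - w‖ := by
    have h1 : a - w = (a - x) + (x - w) := by abel
    calc ‖a - w‖ = ‖(a - x) + (x - w)‖ := by rw [← h1]
      _ ≤ ‖a - x‖ + ‖x - w‖ := norm_add_le _ _
      _ = ‖x - a‖ + ‖x - w‖ := by rw [norm_sub_rev]
  have hsq : G σ x a * ‖a - w‖ ^ 2 ≤ 2 * σ ^ 2 + 2 * ‖x - w‖ * σ + ‖x - w‖ ^ 2 := by
    have h1 : ‖a - w‖ ^ 2 ≤ (‖x - a‖ + ‖x - w‖) ^ 2 := by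
      nlinarith [norm_nonneg (a - w), norm_nonneg (x - a), norm_nonneg (x - w)]
    have h2 : G σ x a * ‖a - w‖ ^ 2 ≤ G σ x a * (‖x - a‖ + ‖x - w‖) ^ 2 :=
      mul_le_mul_of_nonneg_left h1 hG
    have h3 := keyG2 hσ x a
    have h4 := keyG1 hσ x a
    have h5 := G_le_one (σ := σ) x a
    nlinarith [norm_nonneg (x - w), norm_nonneg (x - a), mul_nonneg (norm_nonneg (x - w)) hG]
  calc G σ x a * |⟪a - w, v⟫| * ‖a - w‖ ≤ G σ x a * (‖a - w‖ * ‖v‖) * ‖a - w‖ := by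
        apply mul_le_mul_of_nonneg_right _ (norm_nonneg _)
        exact mul_le_mul_of_nonneg_left hv hG
    _ = (G σ x a * ‖a - w‖ ^ 2) * ‖v‖ := by ring
    _ ≤ (2 * σ ^ 2 + 2 * ‖x - w‖ * σ + ‖x - w‖ ^ 2) * ‖v‖ :=
        mul_le_mul_of_nonneg_right hsq (norm_nonneg v)

lemma P_pos [IsProbabilityMeasure μ] (x : E) : 0 < ∫ a, G σ x a ∂μ := by
  rw [integral_pos_iff_support_of_nonneg (fun a => (G_pos x a).le) (intG x)]
  have hs : Function.support (fun a : E => G σ x a) = Set.univ := by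
    ext a; simp [Function.mem_support, (G_pos (σ := σ) x a).ne']
  rw [hs]
  simp


lemma hasFDerivAt_M [IsProbabilityMeasure μ] (hσ : 0 < σ) (x : E) :
    HasFDerivAt (fun x : E => (∫ a, G σ x a ∂μ)⁻¹ • ∫ a, G σ x a • a ∂μ)
      ((∫ a, G σ x a ∂μ)⁻¹ •
          (∫ a, (-(σ ^ 2)⁻¹ * G σ x a) • ((innerSL ℝ (x - a)).smulRight a) ∂μ)
        + ((-((∫ a, G σ x a ∂μ) ^ 2)⁻¹) •
            (∫ a, (-(σ ^ 2)⁻¹ * G σ x a) • innerSL ℝ (x - a) ∂μ)).smulRight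
              (∫ a, G σ x a • a ∂μ)) x := by
  have hP := hasFDerivAt_P (μ := μ) hσ x
  have hN := hasFDerivAt_N (μ := μ) hσ x
  have hq := (P_pos (μ := μ) (σ := σ) x).ne'
  have hinv := (hasDerivAt_inv hq).comp_hasFDerivAt x hP
  exact hinv.smul hN

lemma N'_apply [IsProbabilityMeasure μ] (hσ : 0 < σ) (x v : E) :
    (∫ a, (-(σ ^ 2)⁻¹ * G σ x a) • ((innerSL ℝ (x - a)).smulRight a) ∂μ) v
      = (σ ^ 2)⁻¹ • ∫ a, (G σ x a * ⟪a - x, v⟫) • a ∂μ := by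
  rw [ContinuousLinearMap.integral_apply (intF'' hσ x) v, ← integral_smul]
  congr 1
  funext a
  have hneg : (⟪x - a, v⟫ : ℝ) = -⟪a - x, v⟫ := by rw [← inner_neg_left, neg_sub]
  simp only [ContinuousLinearMap.smul_apply, ContinuousLinearMap.smulRight_apply,
    innerSL_apply_apply, smul_eq_mul]
  rw [hneg]
  module

lemma P'_apply [IsProbabilityMeasure μ] (hσ : 0 < σ) (x v : E) :
    (∫ a, (-(σ ^ 2)⁻¹ * G σ x a) • innerSL ℝ (x - a) ∂μ) v
      = (σ ^ 2)⁻¹ * ∫ a, G σ x a * ⟪a - x, v⟫ ∂μ := by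
  rw [ContinuousLinearMap.integral_apply (intF' hσ x) v, ← integral_const_mul]
  congr 1
  funext a
  have hneg : (⟪x - a, v⟫ : ℝ) = -⟪a - x, v⟫ := by rw [← inner_neg_left, neg_sub]
  simp only [ContinuousLinearMap.smul_apply, innerSL_apply_apply, smul_eq_mul]
  rw [hneg]
  ring

lemma cov_integral [IsProbabilityMeasure μ] (hσ : 0 < σ) (x v : E) :
    ∫ a, (G σ x a * ⟪a - ((∫ a, G σ x a ∂μ)⁻¹ • ∫ a, G σ x a • a ∂μ), v⟫) •
        (a - ((∫ a, G σ x a ∂μ)⁻¹ • ∫ a, G σ x a • a ∂μ)) ∂μ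
      = (∫ a, (G σ x a * ⟪a - x, v⟫) • a ∂μ)
        - (∫ a, G σ x a * ⟪a - x, v⟫ ∂μ) •
            ((∫ a, G σ x a ∂μ)⁻¹ • ∫ a, G σ x a • a ∂μ) := by
  set q : ℝ := ∫ a, G σ x a ∂μ with hqdef
  set Nx : EuclideanSpace ℝ (Fin d) := ∫ a, G σ x a • a ∂μ with hNdef
  set w : EuclideanSpace ℝ (Fin d) := q⁻¹ • Nx with hwdef
  have hq := P_pos (μ := μ) (σ := σ) x
  have hNw : Nx = q • w := by
    rw [hwdef, smul_smul, mul_inv_cancel₀ hq.ne', one_smul]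
  set c : ℝ := (⟪x - w, v⟫ : ℝ) with hcdef
  have hsplit : (fun a : E => (G σ x a * ⟪a - w, v⟫) • (a - w))
      = fun a : E => ((G σ x a * ⟪a - x, v⟫) • a + c • (G σ x a • a))
          - ((G σ x a * ⟪a - x, v⟫) • w + (c * G σ x a) • w) := by
    funext a
    have hinner : (⟪a - w, v⟫ : ℝ) = ⟪a - x, v⟫ + ⟪x - w, v⟫ := by
      rw [← inner_add_left, sub_add_sub_cancel]
    rw [hinner, ← hcdef]
    module
  have hi1 : Integrable (fun a : E => (G σ x a * ⟪a - x, v⟫) • a) μ := intK hσ x v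
  have hi2 : Integrable (fun a : E => c • (G σ x a • a)) μ := (intGsmul hσ x).smul c
  have hi3 : Integrable (fun a : E => (G σ x a * ⟪a - x, v⟫) • w) μ :=
    (intk hσ x v).smul_const w
  have hi4 : Integrable (fun a : E => (c * G σ x a) • w) μ :=
    ((intG x).const_mul c).smul_const w
  have hi12 : Integrable (fun a : E =>
      (G σ x a * ⟪a - x, v⟫) • a + c • (G σ x a • a)) μ := hi1.add hi2
  have hi34 : Integrable (fun a : E =>
      (G σ x a * ⟪a - x, v⟫) • w + (c * G σ x a) • w) μ := hi3.add hi4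
  rw [hsplit, integral_sub hi12 hi34, integral_add hi1 hi2,
    integral_add hi3 hi4, integral_smul, integral_smul_const, integral_smul_const,
    integral_const_mul]
  rw [show (∫ a, G σ x a • a ∂μ) = q • w from hNw, ← hqdef]
  module

end Tweedie

open Tweedie in
/-- **Second-order Tweedie's formula.** The posterior mean `m` is differentiable and
`σ²` times its Jacobian (Fréchet derivative) equals the posterior covariance operator
`C(x) v = (1/p(x)) ∫ exp(−‖x−x₀‖²/(2σ²)) ⟪x₀ − m(x), v⟫ (x₀ − m(x)) dμ(x₀)`;
in particular the Jacobian is symmetric and positive semidefinite. -/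
theorem second_order_tweedie {d : ℕ} (μ : Measure (EuclideanSpace ℝ (Fin d)))
    [IsProbabilityMeasure μ] (σ : ℝ) (hσ : 0 < σ)
    (p : EuclideanSpace ℝ (Fin d) → ℝ)
    (hp : ∀ x, p x = ∫ x₀, Real.exp (-‖x - x₀‖ ^ 2 / (2 * σ ^ 2)) ∂μ)
    (m : EuclideanSpace ℝ (Fin d) → EuclideanSpace ℝ (Fin d))
    (hm : ∀ x, m x = (p x)⁻¹ • ∫ x₀, Real.exp (-‖x - x₀‖ ^ 2 / (2 * σ ^ 2)) • x₀ ∂μ) :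
    Differentiable ℝ m ∧
    (∀ x v, σ ^ 2 • fderiv ℝ m x v = (p x)⁻¹ •
      ∫ x₀, (Real.exp (-‖x - x₀‖ ^ 2 / (2 * σ ^ 2)) * ⟪x₀ - m x, v⟫) • (x₀ - m x) ∂μ) ∧
    (∀ x u v, ⟪fderiv ℝ m x u, v⟫ = ⟪u, fderiv ℝ m x v⟫) ∧
    (∀ x v, 0 ≤ ⟪fderiv ℝ m x v, v⟫) := by
  have hpe : p = fun x => ∫ a, G σ x a ∂μ := funext hp
  subst hpe
  have hme : m = fun x => (∫ a, G σ x a ∂μ)⁻¹ • ∫ a, G σ x a • a ∂μ := funext hm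
  subst hme
  set M : EuclideanSpace ℝ (Fin d) → EuclideanSpace ℝ (Fin d) :=
    fun x => (∫ a, G σ x a ∂μ)⁻¹ • ∫ a, G σ x a • a ∂μ with hMdef
  suffices H : Differentiable ℝ M ∧
      (∀ x v, σ ^ 2 • fderiv ℝ M x v = (∫ a, G σ x a ∂μ)⁻¹ •
        ∫ a, (G σ x a * ⟪a - M x, v⟫) • (a - M x) ∂μ) ∧
      (∀ x u v, ⟪fderiv ℝ M x u, v⟫ = ⟪u, fderiv ℝ M x v⟫) ∧
      (∀ x v, 0 ≤ ⟪fderiv ℝ M x v, v⟫) by exact H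
  have hdiff : Differentiable ℝ M := by
    rw [hMdef]
    exact fun x => (hasFDerivAt_M (μ := μ) hσ x).differentiableAt
  have hfder : ∀ x, fderiv ℝ M x =
      (∫ a, G σ x a ∂μ)⁻¹ •
          (∫ a, (-(σ ^ 2)⁻¹ * G σ x a) • ((innerSL ℝ (x - a)).smulRight a) ∂μ)
        + ((-((∫ a, G σ x a ∂μ) ^ 2)⁻¹) •
            (∫ a, (-(σ ^ 2)⁻¹ * G σ x a) • innerSL ℝ (x - a) ∂μ)).smulRight
              (∫ a, G σ x a • a ∂μ) := by
    intro x
    rw [hMdef]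
    exact (hasFDerivAt_M (μ := μ) hσ x).fderiv
  have hcov : ∀ x v, σ ^ 2 • fderiv ℝ M x v = (∫ a, G σ x a ∂μ)⁻¹ •
      ∫ a, (G σ x a * ⟪a - M x, v⟫) • (a - M x) ∂μ := by
    intro x v
    have hMx : M x = (∫ a, G σ x a ∂μ)⁻¹ • ∫ a, G σ x a • a ∂μ := by rw [hMdef]
    rw [hfder x, hMx]
    simp only [ContinuousLinearMap.add_apply, ContinuousLinearMap.smul_apply,
      ContinuousLinearMap.smulRight_apply]
    rw [N'_apply (μ := μ) hσ x v, P'_apply (μ := μ) hσ x v,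
      cov_integral (μ := μ) hσ x v]
    have hq := P_pos (μ := μ) (σ := σ) x
    match_scalars
    all_goals (field_simp [hσ.ne', hq.ne']; try ring)
    all_goals (simp only [inv_pow]; field_simp)
  have key : ∀ x u v, σ ^ 2 * ⟪fderiv ℝ M x u, v⟫
      = (∫ a, G σ x a ∂μ)⁻¹ * ∫ a, G σ x a * (⟪a - M x, u⟫ * ⟪a - M x, v⟫) ∂μ := by
    intro x u v
    have h2 : ⟪σ ^ 2 • fderiv ℝ M x u, v⟫
        = ⟪(∫ a, G σ x a ∂μ)⁻¹ • ∫ a, (G σ x a * ⟪a - M x, u⟫) • (a - M x) ∂μ, v⟫ := by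
      rw [hcov x u]
    rw [real_inner_smul_left, real_inner_smul_left] at h2
    rw [h2]
    congr 1
    calc ⟪∫ a, (G σ x a * ⟪a - M x, u⟫) • (a - M x) ∂μ, v⟫
        = ⟪v, ∫ a, (G σ x a * ⟪a - M x, u⟫) • (a - M x) ∂μ⟫ := real_inner_comm _ _
      _ = ∫ a, ⟪v, (G σ x a * ⟪a - M x, u⟫) • (a - M x)⟫ ∂μ :=
          (integral_inner (intCov (μ := μ) hσ x (M x) u) v).symm
      _ = ∫ a, G σ x a * (⟪a - M x, u⟫ * ⟪a - M x, v⟫) ∂μ := by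
          congr 1
          funext a
          rw [real_inner_smul_right, real_inner_comm v (a - M x)]
          ring
  have hsym : ∀ x u v, ⟪fderiv ℝ M x u, v⟫ = ⟪u, fderiv ℝ M x v⟫ := by
    intro x u v
    have hσ2 : (σ : ℝ) ^ 2 ≠ 0 := pow_ne_zero 2 hσ.ne'
    apply mul_left_cancel₀ hσ2
    rw [key x u v,
      show (⟪u, fderiv ℝ M x v⟫ : ℝ) = ⟪fderiv ℝ M x v, u⟫ from real_inner_comm _ _,
      key x v u]
    congr 1
    congr 1
    funext a
    ring
  have hpsd : ∀ x v, 0 ≤ ⟪fderiv ℝ M x v, v⟫ := by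
    intro x v
    have h := key x v v
    have hq := P_pos (μ := μ) (σ := σ) x
    have hnn : 0 ≤ (∫ a, G σ x a ∂μ)⁻¹ *
        ∫ a, G σ x a * (⟪a - M x, v⟫ * ⟪a - M x, v⟫) ∂μ :=
      mul_nonneg (inv_nonneg.2 hq.le) (integral_nonneg fun a =>
        mul_nonneg (G_pos x a).le (mul_self_nonneg _))
    have h0 : 0 ≤ σ ^ 2 * ⟪fderiv ℝ M x v, v⟫ := h ▸ hnn
    nlinarith [pow_pos hσ 2]
  exact ⟨hdiff, hcov, hsym, hpsd⟩
end
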